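/- arXiv:1912.11845 — 11 statements merged into one kernel-verified Lean document; each statement's English description precedes it below -/
import Mathlib

section
/- Let c ∈ ℚ[[x]] be the Catalan generating function and set f = -x·c³. Then f∘f = x and c·(c∘f) = 1; that is, the Riordan array (c(x), -x·c(x)³) is a Riordan involution. -/
/-!
Substituting `f = -x·c³` into the Catalan equation `c = 1 + x·c²` shows that `c ∘ f` solves
`w = 1 + f·w²`. The Catalan equation is equivalent to `c·(1 - x·c) = 1`, and from it one checks
that `1 - x·c` solves the same equation. That equation has only one solution, since the
difference of two solutions `w, u` is killed by the unit `1 - f·(w + u)`; hence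
`c ∘ f = 1 - x·c = c⁻¹`, and then `f ∘ f = -f·(c ∘ f)³ = x·(c·(1 - x·c))³ = x`.
-/

open PowerSeries Finset

/-- Substitution `f ∘ h` of a power series `h` (intended to have zero constant
term) into a power series `f`: the coefficient of `xⁿ` is
`∑_{k=0}^{n} f_k · [xⁿ](hᵏ)`. -/
noncomputable def PowerSeries.comp {R : Type*} [CommSemiring R]
    (f h : PowerSeries R) : PowerSeries R :=
  PowerSeries.mk fun n => ∑ k ∈ Finset.range (n + 1),
    (PowerSeries.coeff k f) * (PowerSeries.coeff n (h ^ k))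

namespace PowerSeries

variable {R : Type*} [CommRing R]

theorem coeff_pow_eq_zero_of_lt {h : R⟦X⟧} (h0 : constantCoeff h = 0) {n k : ℕ}
    (hnk : n < k) : coeff n (h ^ k) = 0 :=
  X_pow_dvd_iff.mp (pow_dvd_pow_of_dvd (X_dvd_iff.mpr h0) k) n hnk

theorem comp_eq_subst (f : R⟦X⟧) {h : R⟦X⟧} (h0 : constantCoeff h = 0) :
    f.comp h = f.subst h := by
  ext n
  rw [comp, coeff_mk, coeff_subst' (HasSubst.of_constantCoeff_zero' h0)]
  refine (finsum_eq_sum_of_support_subset _ fun k hk => ?_).symm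
  rw [coe_range, Set.mem_Iio, Nat.lt_succ_iff]
  by_contra! hnk
  exact hk (by simp only [coeff_pow_eq_zero_of_lt h0 hnk, mul_zero])

theorem eq_of_eq_one_add_mul_sq {f w u : R⟦X⟧} (hf : constantCoeff f = 0)
    (hw : w = 1 + f * w ^ 2) (hu : u = 1 + f * u ^ 2) : w = u := by
  have hunit : IsUnit (1 - f * (w + u)) := isUnit_iff_constantCoeff.mpr (by simp [hf])
  have hprod : (w - u) * (1 - f * (w + u)) = 0 := by linear_combination hw - hu
  exact sub_eq_zero.mp (hunit.mul_left_eq_zero.mp hprod)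

section CatalanEquation

variable {c : R⟦X⟧} (hc : c = 1 + X * c ^ 2)
include hc

theorem mul_one_sub_X_mul_eq_one : c * (1 - X * c) = 1 := by
  linear_combination hc

theorem one_sub_X_mul_eq_one_add_mul_sq :
    1 - X * c = 1 + -(X * c ^ 3) * (1 - X * c) ^ 2 := by
  linear_combination X * c * (c * (1 - X * c) + 1) * hc

theorem subst_neg_X_mul_pow_three :
    c.subst (-(X * c ^ 3)) = 1 - X * c := by
  have hf0 : constantCoeff (-(X * c ^ 3)) = 0 := by simp
  have hf := HasSubst.of_constantCoeff_zero' hf0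
  refine eq_of_eq_one_add_mul_sq hf0 ?_ (one_sub_X_mul_eq_one_add_mul_sq hc)
  have h := congrArg (substAlgHom (R := R) hf) hc
  rwa [map_add, map_one, map_mul, map_pow, coe_substAlgHom, subst_X hf] at h

theorem subst_neg_X_mul_pow_three_self :
    (-(X * c ^ 3)).subst (-(X * c ^ 3)) = X := by
  have hf := HasSubst.of_constantCoeff_zero' (a := -(X * c ^ 3)) (by simp)
  rw [← coe_substAlgHom hf, map_neg, map_mul, map_pow, coe_substAlgHom, subst_X hf,
    subst_neg_X_mul_pow_three hc]
  linear_combination X * ((c * (1 - X * c)) ^ 2 + c * (1 - X * c) + 1) * hc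

end CatalanEquation

end PowerSeries

theorem stmt0_general (c : PowerSeries ℚ)
    (hc : c = 1 + PowerSeries.X * c ^ 2) :
    PowerSeries.comp (-(PowerSeries.X * c ^ 3)) (-(PowerSeries.X * c ^ 3)) = PowerSeries.X ∧
      c * PowerSeries.comp c (-(PowerSeries.X * c ^ 3)) = 1 := by
  have hf0 : constantCoeff (-(X * c ^ 3)) = 0 := by simp
  rw [comp_eq_subst _ hf0, comp_eq_subst _ hf0, subst_neg_X_mul_pow_three hc]
  exact ⟨subst_neg_X_mul_pow_three_self hc, mul_one_sub_X_mul_eq_one hc⟩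

/-- The Riordan array `(c(x), -x·c(x)³)` is a Riordan involution, where `c` is the
Catalan generating function. -/
theorem stmt0 (c : PowerSeries ℚ) (hc0 : PowerSeries.constantCoeff c = 1)
    (hc : c = 1 + PowerSeries.X * c ^ 2) :
    PowerSeries.comp (-(PowerSeries.X * c ^ 3)) (-(PowerSeries.X * c ^ 3)) = PowerSeries.X ∧
      c * PowerSeries.comp c (-(PowerSeries.X * c ^ 3)) = 1 :=
  stmt0_general c hc
end

section
/- For all natural numbers n and k with k ≤ n, the coefficient of xⁿ in c·(x·c³)^k equals (3k+1)/(n+2k+1) · C(2n+k, n-k) in ℚ, where C denotes the binomial coefficient. That is, the general term of the unsigned Riordan array (c(x), x·c(x)³) is (3k+1)/(n+2k+1)·C(2n+k, n-k). -/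
/-!
Writing `n = r + k`, the series `c · (x c³)^k` is `x^k c^(3k+1)`, so the claim is about the
coefficients of the powers of `c`. These are the ballot numbers:
`(2n + m) [xⁿ] c^m = m · C(2n + m, n)`, proved by a double induction from
`c^(m+1) = c^m + x c^(m+2)`, which is the defining equation multiplied by `c^m`.
Pascal's rule turns `C(2r + 3k + 1, r) / (2r + 3k + 1)` into `C(2r + 3k, r) / (r + 3k + 1)`.
-/

open PowerSeries

theorem ballot_recurrence {R : Type*} [CommRing R] (n m : ℕ) :
    ((2 * n + m + 3 : ℕ) : R) * (m * (2 * n + m + 2).choose (n + 1) +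
        (m + 2) * (2 * n + m + 2).choose n) =
      (2 * n + m + 2 : ℕ) * ((m + 1) * (2 * n + m + 3).choose (n + 1)) := by
  have pascal : ((2 * n + m + 3).choose (n + 1) : R) =
      (2 * n + m + 2).choose n + (2 * n + m + 2).choose (n + 1) := by
    exact_mod_cast congrArg (Nat.cast (R := R)) (Nat.choose_succ_succ (2 * n + m + 2) n)
  have shift : ((2 * n + m + 2).choose (n + 1) : R) * (n + 1) =
      (2 * n + m + 2).choose n * (n + m + 2) := by
    have h := Nat.choose_succ_right_eq (2 * n + m + 2) n
    rw [show 2 * n + m + 2 - n = n + m + 2 by omega] at h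
    exact_mod_cast congrArg (Nat.cast (R := R)) h
  push_cast
  linear_combination (-(m + 1) * (2 * n + m + 2 : R)) * pascal - 2 * shift

theorem pow_succ_eq_of_eq_one_add_X_mul_sq {R : Type*} [CommSemiring R] {c : R⟦X⟧}
    (hc : c = 1 + X * c ^ 2) (m : ℕ) :
    c ^ (m + 1) = c ^ m + X * c ^ (m + 2) := by
  conv_lhs => rw [pow_succ]; arg 2; rw [hc]
  ring

theorem cast_mul_coeff_pow_of_eq_one_add_X_mul_sq {K : Type*} [Field K] [CharZero K]
    {c : K⟦X⟧} (hc0 : constantCoeff c = 1) (hc : c = 1 + X * c ^ 2) (n m : ℕ) :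
    ((2 * n + m : ℕ) : K) * coeff n (c ^ m) = m * (2 * n + m).choose n := by
  induction n generalizing m with
  | zero => simp [coeff_zero_eq_constantCoeff, hc0]
  | succ n ihn =>
    induction m with
    | zero => simp [coeff_one]
    | succ m ihm =>
      have hN : ((2 * n + m + 2 : ℕ) : K) ≠ 0 := Nat.cast_ne_zero.mpr (by omega)
      have hsum : ((2 * n + m + 2 : ℕ) : K) * coeff (n + 1) (c ^ (m + 1)) =
          m * (2 * n + m + 2).choose (n + 1) + (m + 2) * (2 * n + m + 2).choose n := by
        rw [pow_succ_eq_of_eq_one_add_X_mul_sq hc, map_add, coeff_succ_X_mul, mul_add,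
          show 2 * n + m + 2 = 2 * (n + 1) + m by ring, ihm,
          show 2 * (n + 1) + m = 2 * n + (m + 2) by ring, ihn]
        push_cast
        ring
      apply mul_left_cancel₀ hN
      rw [show 2 * (n + 1) + (m + 1) = 2 * n + m + 3 by ring, mul_left_comm, hsum,
        ballot_recurrence]
      push_cast
      ring

/-- The general term of the Riordan array `(c(x), x·c(x)³)` is
`(3k+1)/(n+2k+1)·C(2n+k, n-k)`, where `c` is the Catalan generating function. -/
theorem stmt5 (c : PowerSeries ℚ) (hc0 : PowerSeries.constantCoeff c = 1)
    (hc : c = 1 + PowerSeries.X * c ^ 2) :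
    ∀ n k : ℕ, k ≤ n →
      PowerSeries.coeff n (c * (PowerSeries.X * c ^ 3) ^ k) =
        (3 * (k : ℚ) + 1) / ((n : ℚ) + 2 * k + 1) * ((2 * n + k).choose (n - k) : ℚ) := by
  intro n k hkn
  obtain ⟨r, rfl⟩ : ∃ r, n = r + k := ⟨n - k, by omega⟩
  have hseries : c * (X * c ^ 3) ^ k = X ^ k * c ^ (3 * k + 1) := by ring
  have hcoeff := cast_mul_coeff_pow_of_eq_one_add_X_mul_sq hc0 hc r (3 * k + 1)
  have hpascal : ((2 * r + 3 * k).choose r * (2 * r + 3 * k + 1) : ℚ) =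
      (2 * r + 3 * k + 1).choose r * (r + 3 * k + 1) := by
    have h := Nat.choose_mul_succ_eq (2 * r + 3 * k) r
    rw [show 2 * r + 3 * k + 1 - r = r + 3 * k + 1 by omega] at h
    exact_mod_cast h
  rw [hseries, coeff_X_pow_mul, Nat.add_sub_cancel,
    show 2 * (r + k) + k = 2 * r + 3 * k by ring]
  rw [show 2 * r + (3 * k + 1) = 2 * r + 3 * k + 1 by ring] at hcoeff
  have hN : (2 * r + 3 * k + 1 : ℚ) ≠ 0 := by positivity
  push_cast at hcoeff ⊢
  rw [div_mul_eq_mul_div, eq_div_iff (by positivity)]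
  apply mul_left_cancel₀ hN
  linear_combination (r + 3 * k + 1 : ℚ) * hcoeff - (3 * k + 1 : ℚ) * hpascal
end

section
/- For all natural numbers n and k with k ≤ n, the coefficient of xⁿ in c²·(x·c³)^k equals (3k+2)/(n+2k+2) · C(2n+k+1, n-k) in ℚ, where C denotes the binomial coefficient. That is, the general term of the unsigned Riordan array (c(x)², x·c(x)³) is (3k+2)/(n+2k+2)·C(2n+k+1, n-k). -/
/-!
From `c = 1 + X * c²` we get `c^(m+1) = c^m + X * c^(m+2)`, so the coefficients
`b n m = [xⁿ] c^m` satisfy `b (n+1) (m+1) = b (n+1) m + b n (m+2)`, with `b 0 m = 1` and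
`b (n+1) 0 = 0`. The ballot numbers `m / (2n+m) * C(2n+m, n)` obey the same recurrence
(Pascal's rule), hence `[xⁿ] c^m = m / (2n+m) * C(2n+m, n)`. The theorem is the case
`m = 3k+2`, after pulling `X^k` out of `c² * (X * c³)^k`.
-/

open PowerSeries

variable {K : Type*} [Field K] [CharZero K]

/-- Takes the junk value `0` at `n = m = 0`, where `[x⁰] c⁰ = 1`. -/
def catalanPowCoeff (n m : ℕ) : K := (m : K) / (2 * n + m) * (2 * n + m).choose n

theorem catalanPowCoeff_succ_succ (n m : ℕ) :
    (catalanPowCoeff (n + 1) (m + 1) : K) =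
      catalanPowCoeff (n + 1) m + catalanPowCoeff n (m + 2) := by
  have pascal := Nat.choose_succ_succ' (2 * n + m + 2) n
  have ratio := Nat.choose_succ_right_eq (2 * n + m + 2) n
  rw [show 2 * n + m + 2 - n = n + m + 2 by omega] at ratio
  simp only [catalanPowCoeff]
  rw [show 2 * (n + 1) + (m + 1) = 2 * n + m + 2 + 1 by ring,
    show 2 * (n + 1) + m = 2 * n + m + 2 by ring, show 2 * n + (m + 2) = 2 * n + m + 2 by ring,
    pascal]
  set a := (2 * n + m + 2).choose n
  set b := (2 * n + m + 2).choose (n + 1)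
  have ratio' : (b : K) * (n + 1) = a * (n + m + 2) := by exact_mod_cast ratio
  have h₁ : (2 * n + m + 3 : K) ≠ 0 := by exact_mod_cast (by omega : 2 * n + m + 3 ≠ 0)
  have h₂ : (2 * n + m + 2 : K) ≠ 0 := by exact_mod_cast (by omega : 2 * n + m + 2 ≠ 0)
  push_cast
  rw [show (2 * (n + 1) + (m + 1) : K) = 2 * n + m + 3 by ring,
    show (2 * (n + 1) + m : K) = 2 * n + m + 2 by ring,
    show (2 * n + (m + 2) : K) = 2 * n + m + 2 by ring]
  field_simp
  linear_combination 2 * ratio'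

theorem catalanPowCoeff_succ_right (n m : ℕ) :
    (catalanPowCoeff n (m + 1) : K) = (m + 1) / (n + m + 1) * (2 * n + m).choose n := by
  have h := Nat.choose_mul_succ_eq (2 * n + m) n
  rw [show 2 * n + m + 1 - n = n + m + 1 by omega] at h
  have h' : ((2 * n + m).choose n : K) * (2 * n + m + 1) =
      (2 * n + m + 1).choose n * (n + m + 1) := by exact_mod_cast h
  have h₁ : (2 * n + m + 1 : K) ≠ 0 := by exact_mod_cast (by omega : 2 * n + m + 1 ≠ 0)
  have h₂ : (n + m + 1 : K) ≠ 0 := by exact_mod_cast (by omega : n + m + 1 ≠ 0)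
  simp only [catalanPowCoeff]
  push_cast
  rw [← add_assoc]
  field_simp
  linear_combination -h'

theorem coeff_pow_eq_catalanPowCoeff {c : K⟦X⟧} (hc : c = 1 + X * c ^ 2) (n m : ℕ)
    (hnm : n ≠ 0 ∨ m ≠ 0) : coeff n (c ^ m) = catalanPowCoeff n m := by
  have hc0 : constantCoeff c = 1 := by
    rw [hc]
    simp
  induction n generalizing m with
  | zero =>
    have hm : (m : K) ≠ 0 := by exact_mod_cast hnm.resolve_left (by simp)
    simp [catalanPowCoeff, hc0, hm]
  | succ n ih =>
    induction m with
    | zero => simp [catalanPowCoeff, coeff_one]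
    | succ m ihm =>
      have hrec : c ^ (m + 1) = c ^ m + X * c ^ (m + 2) := by
        calc c ^ (m + 1) = c ^ m * (1 + X * c ^ 2) := by rw [← hc, pow_succ]
        _ = c ^ m + X * c ^ (m + 2) := by ring
      rw [hrec, map_add, ihm (by simp), coeff_succ_X_mul, ih (m + 2) (by simp),
        catalanPowCoeff_succ_succ]

theorem stmt6_general (c : PowerSeries ℚ)
    (hc : c = 1 + PowerSeries.X * c ^ 2) :
    ∀ n k : ℕ, k ≤ n →
      PowerSeries.coeff n (c ^ 2 * (PowerSeries.X * c ^ 3) ^ k) =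
        (3 * (k : ℚ) + 2) / ((n : ℚ) + 2 * k + 2) * ((2 * n + k + 1).choose (n - k) : ℚ) := by
  intro n k hkn
  obtain ⟨j, rfl⟩ := Nat.exists_eq_add_of_le' hkn
  have hshift : c ^ 2 * (X * c ^ 3) ^ k = X ^ k * c ^ (3 * k + 1 + 1) := by ring
  rw [hshift, coeff_X_pow_mul, coeff_pow_eq_catalanPowCoeff hc _ _ (by simp),
    catalanPowCoeff_succ_right, Nat.add_sub_cancel,
    show 2 * (j + k) + k + 1 = 2 * j + (3 * k + 1) by ring]
  push_cast
  ring

/-- The general term of the Riordan array `(c(x)², x·c(x)³)` is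
`(3k+2)/(n+2k+2)·C(2n+k+1, n-k)`, where `c` is the Catalan generating function. -/
theorem stmt6 (c : PowerSeries ℚ) (hc0 : PowerSeries.constantCoeff c = 1)
    (hc : c = 1 + PowerSeries.X * c ^ 2) :
    ∀ n k : ℕ, k ≤ n →
      PowerSeries.coeff n (c ^ 2 * (PowerSeries.X * c ^ 3) ^ k) =
        (3 * (k : ℚ) + 2) / ((n : ℚ) + 2 * k + 2) * ((2 * n + k + 1).choose (n - k) : ℚ) :=
  stmt6_general c hc
end

section
/- Let a_n ∈ ℚ be the coefficient of xⁿ in c·(1 - x²·c³)⁻¹ (the diagonal sums of the unsigned Riordan array (c, x·c³), the sequence beginning 1, 1, 3, 9, 29, 97, …). Then for every n ≥ 0, det(a_{i+j})_{0≤i,j≤n} = 2ⁿ and det(a_{i+j+1})_{0≤i,j≤n} = 2ⁿ·(1-n). -/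
/-!
Let `L n k = [xⁿ] xᵏ c²ᵏ f` with `f = c·(1 - x²c³)⁻¹`. From `c = 1 + x c²` one gets
`f·(1 - x - 2x²c²) = 1` and `c² = 1 + 2x c² + x²c⁴`, so `L` is the Stieltjes table whose
production matrix is the tridiagonal Jacobi matrix `J` with `1` above the diagonal,
`β = (1, 2, 2, …)` on it and `γ = (2, 1, 1, …)` below it, and `aₙ = L n 0`.
For the weights `w k = γ 0 ⋯ γ (k-1)` the matrix `J · diag w` is symmetric, which gives
`a (i + j) = (L · diag w · Lᵀ) i j` and `a (i + j + 1) = (L · J · diag w · Lᵀ) i j`.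
As `L` is unitriangular, the two Hankel determinants are `∏ w k = 2ⁿ` and `2ⁿ · det J`, and
expanding the tridiagonal determinant along its first row gives `det J = (n + 1) - 2n`.
-/

open PowerSeries Finset

namespace Stieltjes

variable {R : Type*} [CommRing R] (β γ : ℕ → R)

def table : ℕ → ℕ → R
  | 0, k => if k = 0 then 1 else 0
  | n + 1, 0 => β 0 * table n 0 + γ 0 * table n 1
  | n + 1, k + 1 => table n k + β (k + 1) * table n (k + 1) + γ (k + 1) * table n (k + 2)

def jacobiEntry (l k : ℕ) : R :=
  if l + 1 = k then 1 else if l = k then β k else if l = k + 1 then γ k else 0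

def jacobiMatrix (N : ℕ) : Matrix (Fin N) (Fin N) R :=
  Matrix.of fun l k => jacobiEntry β γ l k

def weight (k : ℕ) : R := ∏ i ∈ range k, γ i

variable {β γ}

lemma table_eq_zero_of_lt {n k : ℕ} (h : n < k) : table β γ n k = 0 := by
  induction n generalizing k with
  | zero => simp [table, Nat.pos_iff_ne_zero.mp h]
  | succ n ih =>
    obtain ⟨k, rfl⟩ : ∃ j, k = j + 1 := ⟨k - 1, by omega⟩
    simp only [table, ih (by omega : n < k), ih (by omega : n < k + 1),
      ih (by omega : n < k + 2)]
    ring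

lemma table_self (n : ℕ) : table β γ n n = 1 := by
  induction n with
  | zero => simp [table]
  | succ n ih => simp [table, ih, table_eq_zero_of_lt]

lemma table_succ_eq_sum {n k N : ℕ} (hn : n < N) (hk : k < N) :
    table β γ (n + 1) k = ∑ l ∈ range N, table β γ n l * jacobiEntry β γ l k := by
  have split (l : ℕ) : table β γ n l * jacobiEntry β γ l k =
      (if l + 1 = k then table β γ n l else 0) + (if l = k then β k * table β γ n l else 0) +
        (if l = k + 1 then γ k * table β γ n l else 0) := by
    unfold jacobiEntry; split_ifs <;> first | omega | ring
  have last : (if k + 1 < N then γ k * table β γ n (k + 1) else 0) =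
      γ k * table β γ n (k + 1) := by
    split_ifs with h
    · rfl
    · rw [table_eq_zero_of_lt (by omega), mul_zero]
  cases k with
  | zero => simp [split, sum_add_distrib, table, hk, last]
  | succ k => simp [split, sum_add_distrib, table, hk, last, show k < N by omega]

lemma coeff_eq_table (g : ℕ → R⟦X⟧)
    (hg_const : ∀ k, constantCoeff (g k) = if k = 0 then 1 else 0)
    (hg_zero : g 0 = 1 + X * (C (β 0) * g 0 + C (γ 0) * g 1))
    (hg_succ : ∀ k,
      g (k + 1) = X * (g k + C (β (k + 1)) * g (k + 1) + C (γ (k + 1)) * g (k + 2)))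
    (n k : ℕ) : coeff n (g k) = table β γ n k := by
  induction n generalizing k with
  | zero => simp [table, hg_const]
  | succ n ih =>
    cases k with
    | zero => rw [hg_zero]; simp [coeff_succ_X_mul, coeff_C_mul, ih, table]
    | succ k => rw [hg_succ]; simp [coeff_succ_X_mul, coeff_C_mul, ih, table]

lemma jacobiEntry_mul_weight (l k : ℕ) :
    jacobiEntry β γ l k * weight γ k = weight γ l * jacobiEntry β γ k l := by
  unfold jacobiEntry weight
  split_ifs <;> subst_vars <;> first | omega | simp [prod_range_succ, mul_comm]

lemma sum_table_succ_left {m n N : ℕ} (hm : m < N) (hn : n < N) :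
    ∑ k ∈ range N, table β γ (m + 1) k * weight γ k * table β γ n k =
      ∑ k ∈ range N, table β γ m k * weight γ k * table β γ (n + 1) k := by
  calc _ = ∑ k ∈ range N, ∑ l ∈ range N,
        table β γ m l * jacobiEntry β γ l k * weight γ k * table β γ n k := by
        refine sum_congr rfl fun k hk => ?_
        rw [table_succ_eq_sum hm (mem_range.mp hk), sum_mul, sum_mul]
    _ = ∑ l ∈ range N, ∑ k ∈ range N,
        table β γ m l * weight γ l * (table β γ n k * jacobiEntry β γ k l) := by
        rw [sum_comm]
        refine sum_congr rfl fun l _ => sum_congr rfl fun k _ => ?_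
        linear_combination
          table β γ m l * table β γ n k * jacobiEntry_mul_weight (β := β) (γ := γ) l k
    _ = _ := by
        refine sum_congr rfl fun l hl => ?_
        rw [table_succ_eq_sum hn (mem_range.mp hl), mul_sum]

lemma sum_table_mul_weight_mul_table_of_add_lt {m n N : ℕ} (h : m + n < N) :
    ∑ k ∈ range N, table β γ m k * weight γ k * table β γ n k = table β γ (m + n) 0 := by
  induction m generalizing n with
  | zero => simp [table, weight, ite_mul, show 0 < N by omega]
  | succ m ih =>
    rw [sum_table_succ_left (by omega) (by omega), ih (by omega), Nat.add_right_comm,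
      Nat.add_assoc]

lemma sum_table_mul_weight_mul_table {m n N : ℕ} (hm : m < N) :
    ∑ k ∈ range N, table β γ m k * weight γ k * table β γ n k = table β γ (m + n) 0 := by
  rw [← sum_table_mul_weight_mul_table_of_add_lt (N := N + m + n + 1) (by omega)]
  refine sum_subset (range_subset_range.mpr (by omega)) fun k _ hk => ?_
  rw [table_eq_zero_of_lt (by simp at hk; omega), zero_mul, zero_mul]

lemma det_tableMatrix (N : ℕ) : (Matrix.of fun i k : Fin N => table β γ i k).det = 1 := by
  rw [Matrix.det_of_isLowerTriangular _ fun i k (h : i < k) => by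
    exact table_eq_zero_of_lt (β := β) (γ := γ) h]
  simp [table_self]

theorem det_hankel (N : ℕ) :
    (Matrix.of fun i j : Fin N => table β γ (i + j) 0).det = ∏ k ∈ range N, weight γ k := by
  set L := Matrix.of fun i k : Fin N => table β γ i k
  have factor : (Matrix.of fun i j : Fin N => table β γ (i + j) 0) =
      L * Matrix.diagonal (fun k : Fin N => weight γ k) * L.transpose := by
    ext i j
    rw [Matrix.mul_apply]
    simp only [L, Matrix.mul_diagonal, Matrix.transpose_apply, Matrix.of_apply]
    rw [Fin.sum_univ_eq_sum_range (fun k => table β γ i k * weight γ k * table β γ j k),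
      sum_table_mul_weight_mul_table i.isLt]
  rw [factor, Matrix.det_mul, Matrix.det_mul, Matrix.det_transpose, det_tableMatrix,
    Matrix.det_diagonal, Fin.prod_univ_eq_prod_range (fun k => weight γ k), one_mul, mul_one]

theorem det_hankel_succ (N : ℕ) :
    (Matrix.of fun i j : Fin N => table β γ (i + j + 1) 0).det =
      (∏ k ∈ range N, weight γ k) * (jacobiMatrix β γ N).det := by
  set L := Matrix.of fun i k : Fin N => table β γ i k
  have shift : L * jacobiMatrix β γ N = Matrix.of fun i k : Fin N => table β γ (i + 1) k := by
    ext i k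
    simp only [L, jacobiMatrix, Matrix.mul_apply, Matrix.of_apply]
    rw [Fin.sum_univ_eq_sum_range (fun l => table β γ i l * jacobiEntry β γ l k),
      table_succ_eq_sum i.isLt k.isLt]
  have factor : (Matrix.of fun i j : Fin N => table β γ (i + j + 1) 0) =
      L * jacobiMatrix β γ N * Matrix.diagonal (fun k : Fin N => weight γ k) * L.transpose := by
    ext i j
    rw [Matrix.mul_apply]
    simp only [Matrix.mul_diagonal, shift, L, Matrix.transpose_apply, Matrix.of_apply]
    rw [Fin.sum_univ_eq_sum_range (fun k => table β γ (i + 1) k * weight γ k * table β γ j k),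
      show (i + j + 1 : ℕ) = j + (i + 1) by omega, ← sum_table_mul_weight_mul_table j.isLt]
    exact sum_congr rfl fun k _ => by ring
  rw [factor, Matrix.det_mul, Matrix.det_mul, Matrix.det_mul, Matrix.det_transpose,
    det_tableMatrix, Matrix.det_diagonal, Fin.prod_univ_eq_prod_range (fun k => weight γ k)]
  ring

lemma jacobiEntry_succ_succ (l k : ℕ) :
    jacobiEntry β γ (l + 1) (k + 1) =
      jacobiEntry (fun k => β (k + 1)) (fun k => γ (k + 1)) l k := by
  simp [jacobiEntry]

theorem det_jacobiMatrix_succ_succ (N : ℕ) :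
    (jacobiMatrix β γ (N + 2)).det =
      β 0 * (jacobiMatrix (fun k => β (k + 1)) (fun k => γ (k + 1)) (N + 1)).det -
        γ 0 * (jacobiMatrix (fun k => β (k + 2)) (fun k => γ (k + 2)) N).det := by
  set J := jacobiMatrix β γ (N + 2)
  have minor₀ : J.submatrix Fin.succ (Fin.succAbove 0) =
      jacobiMatrix (fun k => β (k + 1)) (fun k => γ (k + 1)) (N + 1) := by
    ext i k
    simp [J, jacobiMatrix, jacobiEntry_succ_succ]
  have minor₁ : (J.submatrix Fin.succ (Fin.succ 0).succAbove).det =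
      γ 0 * (jacobiMatrix (fun k => β (k + 2)) (fun k => γ (k + 2)) N).det := by
    have minor₁₀ : (J.submatrix Fin.succ (Fin.succ 0).succAbove).submatrix (Fin.succAbove 0)
        Fin.succ = jacobiMatrix (fun k => β (k + 2)) (fun k => γ (k + 2)) N := by
      ext i k
      simp [J, jacobiMatrix, jacobiEntry, Fin.succAbove, Fin.lt_def]
    rw [Matrix.det_succ_column_zero, Fin.sum_univ_succ, minor₁₀,
      sum_eq_zero fun i _ => by simp [J, jacobiMatrix, jacobiEntry]]
    simp [J, jacobiMatrix, jacobiEntry]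
  rw [Matrix.det_succ_row_zero, Fin.sum_univ_succ, Fin.sum_univ_succ, minor₀, minor₁]
  simp [J, jacobiMatrix, jacobiEntry, sub_eq_add_neg]

lemma det_jacobiMatrix_two_one (N : ℕ) :
    (jacobiMatrix (fun _ => (2 : R)) (fun _ => 1) N).det = N + 1 := by
  induction N using Nat.twoStepInduction with
  | zero => simp
  | one => norm_num [jacobiMatrix, jacobiEntry]
  | more N ih₀ ih₁ =>
    rw [det_jacobiMatrix_succ_succ, ih₀, ih₁]
    push_cast
    ring

end Stieltjes

section Catalan

variable {K : Type*} [Field K] {c : K⟦X⟧}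

lemma constantCoeff_eq_one_of_eq_one_add_X_mul_sq (hc : c = 1 + X * c ^ 2) :
    constantCoeff c = 1 := by
  rw [hc]; simp

lemma mul_inv_mul_one_sub_eq_one (hc : c = 1 + X * c ^ 2) :
    c * (1 - X ^ 2 * c ^ 3)⁻¹ * (1 - X - 2 * X ^ 2 * c ^ 2) = 1 := by
  have hu : (1 - X ^ 2 * c ^ 3) * (1 - X ^ 2 * c ^ 3)⁻¹ = 1 :=
    PowerSeries.mul_inv_cancel _ (by simp)
  linear_combination (1 - X ^ 2 * c ^ 3)⁻¹ * (1 + X * c) * hc + hu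

end Catalan

open Stieltjes

def diagSumsβ (k : ℕ) : ℚ := if k = 0 then 1 else 2

def diagSumsγ (k : ℕ) : ℚ := if k = 0 then 2 else 1

lemma coeff_eq_table_diagSums {c : ℚ⟦X⟧} (hc : c = 1 + X * c ^ 2) (n k : ℕ) :
    coeff n (X ^ k * c ^ (2 * k) * (c * (1 - X ^ 2 * c ^ 3)⁻¹)) =
      table diagSumsβ diagSumsγ n k := by
  set f := c * (1 - X ^ 2 * c ^ 3)⁻¹
  have hc₀ := constantCoeff_eq_one_of_eq_one_add_X_mul_sq hc
  have hf := mul_inv_mul_one_sub_eq_one hc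
  refine coeff_eq_table (fun k => X ^ k * c ^ (2 * k) * f) (fun k => ?_) ?_ (fun k => ?_) n k
  · cases k <;> simp [f, hc₀]
  · simp only [diagSumsβ, diagSumsγ, if_pos, map_one, map_ofNat C 2]
    linear_combination hf
  · simp only [diagSumsβ, diagSumsγ, Nat.add_eq_zero_iff, one_ne_zero, and_false, if_false,
      map_one, map_ofNat C 2]
    linear_combination X ^ (k + 1) * c ^ (2 * k) * f * (c + 1 + X * c ^ 2) * hc

lemma prod_weight_diagSumsγ (n : ℕ) : ∏ k ∈ range (n + 1), weight diagSumsγ k = 2 ^ n := by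
  have h (k : ℕ) : weight diagSumsγ (k + 1) = 2 := by simp [weight, diagSumsγ]
  rw [prod_range_succ', weight, prod_range_zero, mul_one]
  simp only [h, prod_const, card_range]

lemma det_jacobiMatrix_diagSums (n : ℕ) :
    (jacobiMatrix diagSumsβ diagSumsγ (n + 1)).det = 1 - n := by
  cases n with
  | zero => simp [jacobiMatrix, jacobiEntry, diagSumsβ]
  | succ n =>
    have hβ₁ : (fun k => diagSumsβ (k + 1)) = fun _ => 2 := by funext; simp [diagSumsβ]
    have hγ₁ : (fun k => diagSumsγ (k + 1)) = fun _ => 1 := by funext; simp [diagSumsγ]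
    have hβ₂ : (fun k => diagSumsβ (k + 2)) = fun _ => 2 := by funext; simp [diagSumsβ]
    have hγ₂ : (fun k => diagSumsγ (k + 2)) = fun _ => 1 := by funext; simp [diagSumsγ]
    rw [det_jacobiMatrix_succ_succ, hβ₁, hγ₁, hβ₂, hγ₂, det_jacobiMatrix_two_one,
      det_jacobiMatrix_two_one]
    norm_num [diagSumsβ, diagSumsγ]
    ring

theorem stmt7_general (c : PowerSeries ℚ)
    (hc : c = 1 + PowerSeries.X * c ^ 2)
    (a : ℕ → ℚ)
    (ha : ∀ n, a n = PowerSeries.coeff n (c * (1 - PowerSeries.X ^ 2 * c ^ 3)⁻¹)) :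
    ∀ n : ℕ,
      (Matrix.of fun i j : Fin (n + 1) => a ((i : ℕ) + (j : ℕ))).det = 2 ^ n ∧
      (Matrix.of fun i j : Fin (n + 1) => a ((i : ℕ) + (j : ℕ) + 1)).det =
        2 ^ n * (1 - (n : ℚ)) := by
  intro n
  have ha' (m : ℕ) : a m = table diagSumsβ diagSumsγ m 0 := by
    rw [ha, ← coeff_eq_table_diagSums hc m 0]
    simp
  simp only [ha']
  exact ⟨by rw [det_hankel, prod_weight_diagSumsγ],
    by rw [det_hankel_succ, prod_weight_diagSumsγ, det_jacobiMatrix_diagSums]⟩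

/-- The diagonal sums `a_n = [xⁿ] c·(1 - x²·c³)⁻¹` of the Riordan array
`(c, x·c³)` have Hankel transform `2ⁿ`, and the once-shifted sequence has
Hankel transform `2ⁿ·(1-n)`. -/
theorem stmt7 (c : PowerSeries ℚ) (hc0 : PowerSeries.constantCoeff c = 1)
    (hc : c = 1 + PowerSeries.X * c ^ 2)
    (a : ℕ → ℚ)
    (ha : ∀ n, a n = PowerSeries.coeff n (c * (1 - PowerSeries.X ^ 2 * c ^ 3)⁻¹)) :
    ∀ n : ℕ,
      (Matrix.of fun i j : Fin (n + 1) => a ((i : ℕ) + (j : ℕ))).det = 2 ^ n ∧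
      (Matrix.of fun i j : Fin (n + 1) => a ((i : ℕ) + (j : ℕ) + 1)).det =
        2 ^ n * (1 - (n : ℚ)) :=
  stmt7_general c hc a ha
end

section
/- Let b_n ∈ ℚ be the coefficient of xⁿ in c²·(1 - x²·c³)⁻¹ (the diagonal sums of the unsigned Riordan array (c², x·c³), the sequence beginning 1, 2, 6, 19, 63, 215, …). Then for every n ≥ 0, det(b_{i+j})_{0≤i,j≤n} = F_{2n+1}, where F_m denotes the m-th Fibonacci number. -/
/-!
Write `B₀ = c² / (1 - x²c³)`. If a power series has a Jacobi continued fraction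
`B₀ = 1 / (1 - a₀x - λ₁x² / (1 - a₁x - λ₂x² / ⋯))`, its Hankel determinants are
`det (b_{i+j})_{i,j ≤ n} = ∏_{k ≤ n} λ₁ ⋯ λ_k` (Heilermann). Indeed the denominators `Q_k` of the
convergents `P_k / Q_k` satisfy `Q_k B₀ = P_k + x^{2k} (λ₁ ⋯ λ_k + O(x))` with `deg P_k < k`, so
the unitriangular matrix of the coefficients of the `Q_k` turns the Hankel matrix triangular.

For our `B₀` everything becomes rational in `u = x c`, since `c = 1 / (1 - u)` and
`x = u (1 - u)`: `B₀ = 1 / ((1 - u)(1 - u - u²))`, and for `k ≥ 1` the tails of the continued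
fraction are `B_k = F_{2k-1} (F_{2k+1} - F_{2k} u) / (F_{2k+1} (F_{2k-1} - F_{2k-2} u) (1 - u)²)`,
with `a₀ = 2`, `a_k = 2 - 1 / (F_{2k-1} F_{2k+1})` and `λ_k = F_{2k+1} F_{2k-3} / F_{2k-1}²`
(where `F_{-1} = 1`). The relation between consecutive tails reduces to Cassini's identity, and
`λ₁ ⋯ λ_k = F_{2k+1} / F_{2k-1}`, whose product over `k ≤ n` telescopes to `F_{2n+1}`.
-/

open PowerSeries Finset

noncomputable section

namespace PowerSeries

variable {R : Type*} [CommRing R]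

def hankel (f : R⟦X⟧) (n : ℕ) : Matrix (Fin (n + 1)) (Fin (n + 1)) R :=
  Matrix.of fun i j => coeff ((i : ℕ) + j) f

theorem sum_coeff_sub_mul_coeff_add {q : R⟦X⟧} {k : ℕ} (hq : ∀ m ≥ k + 1, coeff m q = 0)
    (f : R⟦X⟧) {n : ℕ} (hkn : k ≤ n) (i : ℕ) :
    ∑ j : Fin (n + 1), (if (j : ℕ) ≤ k then coeff (k - j) q else 0) * coeff (j + i) f =
      coeff (k + i) (q * f) := by
  have hrange : (range (n + 1)).filter (· ≤ k) = range (k + 1) := by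
    ext j; simp only [mem_filter, mem_range]; omega
  have htail : ∑ p ∈ range i, coeff (k + 1 + p) q * coeff (k + i - (k + 1 + p)) f = 0 :=
    sum_eq_zero fun p _ => by rw [hq _ (by omega), zero_mul]
  rw [Fin.sum_univ_eq_sum_range
      (fun j => (if j ≤ k then coeff (k - j) q else 0) * coeff (j + i) f),
    coeff_mul, Nat.sum_antidiagonal_eq_sum_range_succ (fun p m => coeff p q * coeff m f),
    Nat.succ_eq_add_one, show k + i + 1 = (k + 1) + i by omega, sum_range_add _ (k + 1) i, htail,
    add_zero, ← sum_range_reflect (fun p => coeff p q * coeff (k + i - p) f)]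
  simp only [ite_mul, zero_mul]
  rw [← sum_filter, hrange]
  refine sum_congr rfl fun j hj => ?_
  have hj : j ≤ k := by simp only [mem_range] at hj; omega
  rw [show k + 1 - 1 - j = k - j by omega, show k + i - (k - j) = j + i by omega]

section JacobiFraction

variable (a l : ℕ → R)

def jacobiSeq (y₀ y₁ : R⟦X⟧) : ℕ → R⟦X⟧
  | 0 => y₀
  | 1 => y₁
  | k + 2 =>
    (1 - C (a (k + 1)) * X) * jacobiSeq y₀ y₁ (k + 1) - C (l k) * X ^ 2 * jacobiSeq y₀ y₁ k

abbrev jacobiDenom : ℕ → R⟦X⟧ := jacobiSeq a l 1 (1 - C (a 0) * X)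

abbrev jacobiNumer : ℕ → R⟦X⟧ := jacobiSeq a l 0 1

theorem coeff_jacobiSeq_eq_zero {y₀ y₁ : R⟦X⟧} {e : ℕ} (h₀ : ∀ m ≥ e, coeff m y₀ = 0)
    (h₁ : ∀ m ≥ e + 1, coeff m y₁ = 0) :
    ∀ k, ∀ m ≥ k + e, coeff m (jacobiSeq a l y₀ y₁ k) = 0
  | 0, m, hm => h₀ m (by omega)
  | 1, m, hm => h₁ m (by omega)
  | k + 2, m, hm => by
      obtain ⟨m, rfl⟩ : ∃ m', m = m' + 2 := ⟨m - 2, by omega⟩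
      have ih₁ := coeff_jacobiSeq_eq_zero h₀ h₁ (k + 1)
      have ih₀ := coeff_jacobiSeq_eq_zero h₀ h₁ k
      simp only [jacobiSeq, sub_mul, one_mul, mul_assoc, pow_two, map_sub, coeff_C_mul,
        coeff_succ_X_mul]
      rw [ih₁ _ (by omega), ih₁ _ (by omega), ih₀ _ (by omega)]
      simp

theorem constantCoeff_jacobiSeq {y₀ y₁ : R⟦X⟧}
    (h : constantCoeff y₁ = constantCoeff y₀) :
    ∀ k, constantCoeff (jacobiSeq a l y₀ y₁ k) = constantCoeff y₀
  | 0 => rfl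
  | 1 => h
  | k + 2 => by simp [jacobiSeq, constantCoeff_jacobiSeq h (k + 1)]

def jacobiRemainder (B : ℕ → R⟦X⟧) : ℕ → R⟦X⟧
  | 0 => B 0
  | k + 1 => C (l k) * jacobiRemainder B k * B (k + 1)

/-- `B 0 = 1 / (1 - a 0 X - l 0 X² / (1 - a 1 X - l 1 X² / ⋯))`, with tails `B k`. -/
def IsJFraction (B : ℕ → R⟦X⟧) : Prop :=
  ∀ k, (1 - C (a k) * X) * B k = 1 + C (l k) * X ^ 2 * B k * B (k + 1)

theorem coeff_jacobiNumer_eq_zero (k : ℕ) : ∀ m ≥ k, coeff m (jacobiNumer a l k) = 0 := by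
  simpa using coeff_jacobiSeq_eq_zero a l (e := 0) (by simp)
    (fun m hm => by rw [coeff_one, if_neg (by omega)]) k

theorem coeff_jacobiDenom_eq_zero (k : ℕ) : ∀ m ≥ k + 1, coeff m (jacobiDenom a l k) = 0 :=
  coeff_jacobiSeq_eq_zero a l (e := 1) (fun m hm => by rw [coeff_one, if_neg (by omega)])
    (fun m hm => by simp [coeff_one, coeff_X, show m ≠ 0 by omega, show m ≠ 1 by omega]) k

variable {a l} {B : ℕ → R⟦X⟧} (hB : IsJFraction a l B)
include hB

theorem IsJFraction.constantCoeff_eq_one (k : ℕ) : constantCoeff (B k) = 1 := by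
  simpa using congrArg constantCoeff (hB k)

theorem IsJFraction.constantCoeff_jacobiRemainder :
    ∀ k, constantCoeff (jacobiRemainder l B k) = ∏ j ∈ range k, l j
  | 0 => by simp [jacobiRemainder, hB.constantCoeff_eq_one]
  | k + 1 => by
      simp [jacobiRemainder, constantCoeff_jacobiRemainder k, hB.constantCoeff_eq_one,
        prod_range_succ, mul_comm]

theorem IsJFraction.jacobiDenom_mul_eq :
    ∀ k, jacobiDenom a l k * B 0 = jacobiNumer a l k + X ^ (2 * k) * jacobiRemainder l B k
  | 0 => by simp [jacobiSeq, jacobiRemainder]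
  | 1 => by
      simp only [jacobiSeq, jacobiRemainder]
      linear_combination hB 0
  | k + 2 => by
      have hR : (1 - C (a (k + 1)) * X) * jacobiRemainder l B (k + 1) =
          C (l k) * jacobiRemainder l B k + X ^ 2 * jacobiRemainder l B (k + 2) := by
        simp only [jacobiRemainder]
        linear_combination C (l k) * jacobiRemainder l B k * hB (k + 1)
      simp only [jacobiSeq]
      linear_combination (1 - C (a (k + 1)) * X) * jacobiDenom_mul_eq (k + 1)
        - C (l k) * X ^ 2 * jacobiDenom_mul_eq k + X ^ (2 * k + 2) * hR

theorem IsJFraction.coeff_jacobiDenom_mul_of_lt {i k : ℕ} (hik : i < k) :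
    coeff (k + i) (jacobiDenom a l k * B 0) = 0 := by
  rw [hB.jacobiDenom_mul_eq, map_add, coeff_X_pow_mul', if_neg (by omega), add_zero]
  exact coeff_jacobiNumer_eq_zero a l k _ (by omega)

theorem IsJFraction.coeff_jacobiDenom_mul_self (k : ℕ) :
    coeff (k + k) (jacobiDenom a l k * B 0) = ∏ j ∈ range k, l j := by
  rw [hB.jacobiDenom_mul_eq, map_add, coeff_X_pow_mul', if_pos (by omega),
    coeff_jacobiNumer_eq_zero a l k _ (by omega), zero_add, show k + k - 2 * k = 0 by omega,
    coeff_zero_eq_constantCoeff_apply, hB.constantCoeff_jacobiRemainder]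

theorem IsJFraction.det_hankel (n : ℕ) :
    (hankel (B 0) n).det = ∏ k ∈ range (n + 1), ∏ j ∈ range k, l j := by
  let U : Matrix (Fin (n + 1)) (Fin (n + 1)) R := Matrix.of fun k j =>
    if (j : ℕ) ≤ k then coeff (k - j) (jacobiDenom a l k) else 0
  have hUH (k i : Fin (n + 1)) :
      (U * hankel (B 0) n) k i = coeff (k + i) (jacobiDenom a l k * B 0) :=
    sum_coeff_sub_mul_coeff_add (coeff_jacobiDenom_eq_zero a l k) _ (by omega) i
  have hU : U.det = 1 := by
    rw [Matrix.det_of_isLowerTriangular U fun k j hkj => if_neg (by simpa using hkj)]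
    refine prod_eq_one fun k _ => ?_
    simp [U, constantCoeff_jacobiSeq a l (y₀ := 1) (y₁ := 1 - C (a 0) * X) (by simp)]
  have hdet := Matrix.det_of_isUpperTriangular (M := U * hankel (B 0) n) fun k i hik => by
    rw [hUH]; exact hB.coeff_jacobiDenom_mul_of_lt hik
  rw [Matrix.det_mul, hU, one_mul] at hdet
  rw [hdet, ← Fin.prod_univ_eq_prod_range (fun k => ∏ j ∈ range k, l j)]
  exact prod_congr rfl fun k _ => by rw [hUH, hB.coeff_jacobiDenom_mul_self]

end JacobiFraction

end PowerSeries

namespace CatalanDiagonal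

section Identities

variable {A : Type*} [CommRing A] [IsDomain A] {c u x : A}

theorem jFraction_step_zero (hcu : c * (1 - u) = 1) (hx : x = u * (1 - u)) {B₀ B₁ : A}
    (h₀ : B₀ * (1 - x ^ 2 * c ^ 3) = c ^ 2) (h₁ : B₁ * 2 = c ^ 2 * (2 - u))
    (hne : (1 - x ^ 2 * c ^ 3) * 2 ≠ 0) :
    (1 - 2 * x) * B₀ = 1 + 2 * x ^ 2 * B₀ * B₁ := by
  subst hx
  apply mul_right_cancel₀ hne
  linear_combination (2 * (1 - 2 * (u * (1 - u))) - 2 * (u * (1 - u)) ^ 2 * (B₁ * 2)) * h₀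
    - 2 * (u * (1 - u)) ^ 2 * c ^ 2 * h₁
    + 2 * ((c * (1 - u) + 1) * (1 + u ^ 2 * c - u ^ 2 * c ^ 2 * (2 - u)) - u ^ 2 * c) * hcu

/-- `B₁` and `B₂` are the tails at `(S, T) = (F_{2k}, F_{2k+1})` and at the next pair
`(S + T, S + 2T)`; the hypotheses on `c`, `u`, `x` encode `u = x c`. -/
theorem jFraction_step (hcu : c * (1 - u) = 1) (hx : x = u * (1 - u)) {S T α l B₁ B₂ : A}
    (hST : S ^ 2 + S * T - T ^ 2 = -1)
    (hα : α * (T * (S + 2 * T)) = 2 * (T * (S + 2 * T)) - 1)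
    (hl : l * (S + 2 * T) ^ 2 = (3 * S + 5 * T) * T)
    (h₁ : B₁ * ((S + 2 * T) * (T - S * u)) = T * c ^ 2 * (S + 2 * T - (S + T) * u))
    (h₂ : B₂ * ((S + T + 2 * (S + 2 * T)) * (S + 2 * T - (S + T) * u)) =
      (S + 2 * T) * c ^ 2 * (S + T + 2 * (S + 2 * T) - (S + T + (S + 2 * T)) * u))
    (hne : (S + 2 * T) * (T - S * u) * ((S + T + 2 * (S + 2 * T)) * (S + 2 * T - (S + T) * u))
      * (S + 2 * T) ≠ 0) :
    (1 - α * x) * B₁ = 1 + l * x ^ 2 * B₁ * B₂ := by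
  subst hx
  set p := S + 2 * T
  set q := 3 * S + 5 * T
  -- the step with all denominators cleared; the certificate below then only uses `c (1 - u) = 1`
  have hE : (T * p - (2 * (T * p) - 1) * (u * (1 - u))) * (p - (S + T) * u) =
      p ^ 2 * (T - S * u) * (1 - u) ^ 2 + T ^ 2 * u ^ 2 * (q - (2 * S + 3 * T) * u) := by
    linear_combination u * (p - (2 * S + 3 * T) * u + (S + T) * u ^ 2) * hST
  apply mul_right_cancel₀ hne
  linear_combination ((1 - α * (u * (1 - u))) * q * (p - (S + T) * u) * p
      - l * (u * (1 - u)) ^ 2 * p * B₂ * q * (p - (S + T) * u)) * h₁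
    - l * (u * (1 - u)) ^ 2 * p * T * c ^ 2 * (p - (S + T) * u) * h₂
    - (u * (1 - u)) ^ 2 * T * c ^ 4 * (p - (S + T) * u) * (q - (2 * S + 3 * T) * u) * hl
    - q * (p - (S + T) * u) * (u * (1 - u)) * c ^ 2 * (p - (S + T) * u) * hα
    + q * (p - (S + T) * u) * c ^ 2 * hE
    + q * (p - (S + T) * u) * (c * (1 - u) + 1) *
      (p ^ 2 * (T - S * u) - T ^ 2 * u ^ 2 * c ^ 2 * (q - (2 * S + 3 * T) * u)) * hcu

end Identities

def tail (c S T : ℚ⟦X⟧) : ℚ⟦X⟧ :=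
  T * c ^ 2 * (S + 2 * T - (S + T) * (X * c)) * ((S + 2 * T) * (T - S * (X * c)))⁻¹

def B (c : ℚ⟦X⟧) : ℕ → ℚ⟦X⟧
  | 0 => c ^ 2 * (1 - X ^ 2 * c ^ 3)⁻¹
  | k + 1 => tail c (C (Nat.fib (2 * k) : ℚ)) (C (Nat.fib (2 * k + 1) : ℚ))

def a : ℕ → ℚ
  | 0 => 2
  | k + 1 => 2 - 1 / (Nat.fib (2 * k + 1) * Nat.fib (2 * k + 3))

/-- `ratio k = F_{2k+1} / F_{2k-1}`, read with `F_{-1} = 1`. -/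
def ratio : ℕ → ℚ
  | 0 => 1
  | k + 1 => Nat.fib (2 * k + 3) / Nat.fib (2 * k + 1)

def weight (k : ℕ) : ℚ := ratio (k + 1) / ratio k

theorem fib_two_mul_add_one_pos (k : ℕ) : (0 : ℚ) < Nat.fib (2 * k + 1) := by
  exact_mod_cast Nat.fib_pos.mpr (by omega)

theorem ratio_ne_zero : ∀ k, ratio k ≠ 0
  | 0 => one_ne_zero
  | k + 1 => div_ne_zero (fib_two_mul_add_one_pos (k + 1)).ne' (fib_two_mul_add_one_pos k).ne'

theorem prod_range_weight : ∀ k, ∏ j ∈ range k, weight j = ratio k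
  | 0 => rfl
  | k + 1 => by
      rw [prod_range_succ, prod_range_weight k, weight, mul_div_cancel₀ _ (ratio_ne_zero k)]

theorem prod_range_ratio : ∀ n, ∏ k ∈ range (n + 1), ratio k = Nat.fib (2 * n + 1)
  | 0 => by simp [ratio]
  | n + 1 => by
      rw [prod_range_succ, prod_range_ratio n, ratio,
        mul_div_cancel₀ _ (fib_two_mul_add_one_pos n).ne']
      rfl

theorem cast_fib_two_mul_succ (k : ℕ) :
    (Nat.fib (2 * (k + 1)) : ℚ) = Nat.fib (2 * k) + Nat.fib (2 * k + 1) := by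
  rw [Nat.mul_succ, Nat.fib_add_two, Nat.cast_add]

theorem cast_fib_two_mul_succ_add_one (k : ℕ) :
    (Nat.fib (2 * (k + 1) + 1) : ℚ) = Nat.fib (2 * k) + 2 * Nat.fib (2 * k + 1) := by
  rw [show 2 * (k + 1) + 1 = 2 * k + 1 + 2 by ring, Nat.fib_add_two, Nat.cast_add,
    show 2 * k + 1 + 1 = 2 * (k + 1) by ring, cast_fib_two_mul_succ]
  ring

theorem fib_two_mul_sq_add_mul_sub_sq (k : ℕ) :
    (Nat.fib (2 * k) : ℚ) ^ 2 + Nat.fib (2 * k) * Nat.fib (2 * k + 1) - Nat.fib (2 * k + 1) ^ 2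
      = -1 := by
  induction k with
  | zero => simp
  | succ k ih =>
    rw [cast_fib_two_mul_succ, cast_fib_two_mul_succ_add_one]
    linear_combination ih

variable {c : ℚ⟦X⟧}

theorem mul_one_sub_X_mul (hc : c = 1 + X * c ^ 2) : c * (1 - X * c) = 1 := by
  linear_combination hc

theorem X_eq_X_mul_mul_one_sub (hc : c = 1 + X * c ^ 2) : X = X * c * (1 - X * c) := by
  rw [mul_assoc, mul_one_sub_X_mul hc, mul_one]

theorem tail_mul_denom (c S T : ℚ⟦X⟧) (h : constantCoeff ((S + 2 * T) * T) ≠ 0) :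
    tail c S T * ((S + 2 * T) * (T - S * (X * c))) =
      T * c ^ 2 * (S + 2 * T - (S + T) * (X * c)) := by
  rw [tail, mul_assoc, PowerSeries.inv_mul_cancel _ (by simpa using h), mul_one]

theorem tail_step (hc : c = 1 + X * c ^ 2) {s t α l : ℚ} (hs : 0 ≤ s) (ht : 0 < t)
    (hst : s ^ 2 + s * t - t ^ 2 = -1) (hα : α * (t * (s + 2 * t)) = 2 * (t * (s + 2 * t)) - 1)
    (hl : l * (s + 2 * t) ^ 2 = (3 * s + 5 * t) * t) :
    (1 - C α * X) * tail c (C s) (C t) =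
      1 + C l * X ^ 2 * tail c (C s) (C t) * tail c (C (s + t)) (C (s + 2 * t)) := by
  have hD₁ := tail_mul_denom c (C s) (C t)
    (by simpa [map_ofNat] using (by positivity : (s + 2 * t) * t ≠ 0))
  have hD₂ := tail_mul_denom c (C (s + t)) (C (s + 2 * t))
    (by simpa [map_ofNat] using (by positivity : (s + t + 2 * (s + 2 * t)) * (s + 2 * t) ≠ 0))
  generalize tail c (C (s + t)) (C (s + 2 * t)) = B₂ at hD₂ ⊢
  simp only [map_add, map_mul, map_ofNat] at hD₂
  refine jFraction_step (mul_one_sub_X_mul hc) (X_eq_X_mul_mul_one_sub hc)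
    (by simpa using congrArg C hst) (by simpa [map_ofNat] using congrArg C hα)
    (by simpa [map_ofNat] using congrArg C hl) hD₁ hD₂ fun h => absurd
      (by simpa [map_ofNat] using congrArg constantCoeff h)
      (by positivity :
        (s + 2 * t) * t * ((s + t + 2 * (s + 2 * t)) * (s + 2 * t)) * (s + 2 * t) ≠ 0)

theorem isJFraction_B (hc : c = 1 + X * c ^ 2) : IsJFraction a weight (B c)
  | 0 => by
    have h₀ : B c 0 * (1 - X ^ 2 * c ^ 3) = c ^ 2 := by
      rw [B, mul_assoc, PowerSeries.inv_mul_cancel _ (by simp), mul_one]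
    have h₁ : B c 1 * 2 = c ^ 2 * (2 - X * c) := by
      simpa [B, map_ofNat] using tail_mul_denom c (C (Nat.fib 0 : ℚ)) (C (Nat.fib 1 : ℚ))
        (by simp [map_ofNat constantCoeff])
    have hw : weight 0 = 2 := by norm_num [weight, ratio, Nat.fib_add_two]
    show (1 - C 2 * X) * B c 0 = 1 + C (weight 0) * X ^ 2 * B c 0 * B c 1
    rw [hw, map_ofNat]
    exact jFraction_step_zero (mul_one_sub_X_mul hc) (X_eq_X_mul_mul_one_sub hc) h₀ h₁
      fun h => by simpa [map_ofNat constantCoeff] using congrArg constantCoeff h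
  | k + 1 => by
    have hα : a (k + 1) * (Nat.fib (2 * k + 1) * (Nat.fib (2 * k) + 2 * Nat.fib (2 * k + 1))) =
        2 * (Nat.fib (2 * k + 1) * (Nat.fib (2 * k) + 2 * Nat.fib (2 * k + 1))) - 1 := by
      have ht := fib_two_mul_add_one_pos k
      rw [a, show 2 * k + 3 = 2 * (k + 1) + 1 from rfl, cast_fib_two_mul_succ_add_one]
      field_simp
    have hl : weight (k + 1) * (Nat.fib (2 * k) + 2 * Nat.fib (2 * k + 1)) ^ 2 =
        (3 * Nat.fib (2 * k) + 5 * Nat.fib (2 * k + 1)) * Nat.fib (2 * k + 1) := by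
      have ht := fib_two_mul_add_one_pos k
      rw [weight, ratio, ratio, show 2 * (k + 1) + 3 = 2 * (k + 1 + 1) + 1 from rfl,
        cast_fib_two_mul_succ_add_one, cast_fib_two_mul_succ, cast_fib_two_mul_succ_add_one,
        show 2 * k + 3 = 2 * (k + 1) + 1 from rfl, cast_fib_two_mul_succ_add_one]
      field_simp
      ring
    have := tail_step hc (Nat.cast_nonneg _) (fib_two_mul_add_one_pos k)
      (fib_two_mul_sq_add_mul_sub_sq k) hα hl
    rwa [← cast_fib_two_mul_succ, ← cast_fib_two_mul_succ_add_one] at this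

end CatalanDiagonal

end

theorem stmt8_general (c : PowerSeries ℚ)
    (hc : c = 1 + PowerSeries.X * c ^ 2)
    (b : ℕ → ℚ)
    (hb : ∀ n, b n = PowerSeries.coeff n (c ^ 2 * (1 - PowerSeries.X ^ 2 * c ^ 3)⁻¹)) :
    ∀ n : ℕ,
      (Matrix.of fun i j : Fin (n + 1) => b ((i : ℕ) + (j : ℕ))).det =
        (Nat.fib (2 * n + 1) : ℚ) := by
  intro n
  have hH : (Matrix.of fun i j : Fin (n + 1) => b ((i : ℕ) + (j : ℕ))) =
      hankel (CatalanDiagonal.B c 0) n := by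
    ext i j
    exact hb _
  rw [hH, (CatalanDiagonal.isJFraction_B hc).det_hankel,
    ← CatalanDiagonal.prod_range_ratio]
  exact prod_congr rfl fun k _ => CatalanDiagonal.prod_range_weight k

/-- The diagonal sums `b_n = [xⁿ] c²·(1 - x²·c³)⁻¹` of the Riordan array
`(c², x·c³)` have Hankel transform `F_{2n+1}` (Fibonacci numbers). -/
theorem stmt8 (c : PowerSeries ℚ) (hc0 : PowerSeries.constantCoeff c = 1)
    (hc : c = 1 + PowerSeries.X * c ^ 2)
    (b : ℕ → ℚ)
    (hb : ∀ n, b n = PowerSeries.coeff n (c ^ 2 * (1 - PowerSeries.X ^ 2 * c ^ 3)⁻¹)) :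
    ∀ n : ℕ,
      (Matrix.of fun i j : Fin (n + 1) => b ((i : ℕ) + (j : ℕ))).det =
        (Nat.fib (2 * n + 1) : ℚ) :=
  stmt8_general c hc b hb
end

section
/- Let r, λ, μ, σ ∈ ℝ with σ ≠ 0, and set s = σ². Let d_{n,k} be the coefficient of tⁿ in the real formal power series (1 - λt - μt²)·(1 + rt + st²)⁻¹ · (t·(1 + rt + st²)⁻¹)^k. Then for every n ≥ 2 and every x ∈ ℝ, ∑_{k=0}^{n} d_{n,k}·x^k = σⁿ·U_n((x-r)/(2σ)) - λ·σ^{n-1}·U_{n-1}((x-r)/(2σ)) - μ·σ^{n-2}·U_{n-2}((x-r)/(2σ)), where U_m is the m-th Chebyshev polynomial of the second kind. -/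
open PowerSeries Finset Polynomial

/-!
Summing the `n`-th row of a Riordan array `(A, B)` against `xᵏ` gives `[tⁿ] A / (1 - x B)`.
For `A = N / Q` and `B = t / Q` this is `[tⁿ] N / (Q - x t)`, and with `s = σ²` and
`x - r = 2σy` the denominator is `1 - 2y (σt) + (σt)²`, whose inverse is the generating function
`∑ σⁿ Uₙ(y) tⁿ` of the Chebyshev polynomials of the second kind. Multiplying by
`N = 1 - λt - μt²` combines three consecutive terms of it.
-/

namespace PowerSeries

variable {R : Type*} [CommRing R]

theorem coeff_riordan_row_sum {A B F : R⟦X⟧} (x : R) (hB : X ∣ B)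
    (hF : F * (1 - C x * B) = 1) (n : ℕ) :
    ∑ k ∈ range (n + 1), coeff n (A * B ^ k) * x ^ k = coeff n (A * F) := by
  set u := C x * B
  have hgeom : ∑ k ∈ range (n + 1), u ^ k = F - F * u ^ (n + 1) := by
    rw [← mul_one (∑ k ∈ range (n + 1), u ^ k), ← hF, mul_left_comm, geom_sum_mul_neg]
    ring
  have htail : coeff n (A * F * u ^ (n + 1)) = 0 := by
    refine X_pow_dvd_iff.mp ?_ n n.lt_succ_self
    exact Dvd.dvd.mul_left (pow_dvd_pow_of_dvd (hB.mul_left _) _) _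
  calc ∑ k ∈ range (n + 1), coeff n (A * B ^ k) * x ^ k
      = coeff n (A * ∑ k ∈ range (n + 1), u ^ k) := by
        rw [mul_sum, map_sum]
        refine sum_congr rfl fun k _ ↦ ?_
        rw [mul_pow, ← map_pow, mul_left_comm, coeff_C_mul, mul_comm]
    _ = coeff n (A * F) := by rw [hgeom, mul_sub, map_sub, ← mul_assoc, htail, sub_zero]

theorem coeff_zero_quadratic_mul_mk (p q : R) (g : ℕ → R) :
    coeff 0 ((1 + C p * X + C q * X ^ 2) * mk g) = g 0 := by
  simp [add_mul, mul_assoc]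

theorem coeff_one_quadratic_mul_mk (p q : R) (g : ℕ → R) :
    coeff 1 ((1 + C p * X + C q * X ^ 2) * mk g) = g 1 + p * g 0 := by
  simp [add_mul, mul_assoc, coeff_X_pow_mul']

theorem coeff_add_two_quadratic_mul_mk (p q : R) (g : ℕ → R) (n : ℕ) :
    coeff (n + 2) ((1 + C p * X + C q * X ^ 2) * mk g) = g (n + 2) + p * g (n + 1) + q * g n := by
  simp [add_mul, mul_assoc, coeff_X_pow_mul', coeff_succ_X_mul]

theorem mk_scaled_chebyshevU_mul (σ y : R) :
    mk (fun n ↦ σ ^ n * (Chebyshev.U R n).eval y) * (1 - C (2 * σ * y) * X + C (σ ^ 2) * X ^ 2)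
      = 1 := by
  rw [sub_eq_add_neg, ← neg_mul, ← map_neg, mul_comm]
  ext (_ | _ | n)
  · rw [coeff_zero_quadratic_mul_mk]
    simp
  · rw [coeff_one_quadratic_mul_mk]
    simp [Chebyshev.U_one]
    ring
  · rw [coeff_add_two_quadratic_mul_mk, coeff_one, if_neg (by omega)]
    simp only [Nat.cast_add, Nat.cast_ofNat, Nat.cast_one, Chebyshev.U_add_two,
      eval_sub, eval_mul, eval_ofNat, eval_X]
    ring

theorem sum_coeff_riordan_row_eq_chebyshevU {K : Type*} [Field K] (r s lam mu σ x y : K)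
    (hs : s = σ ^ 2) (hy : 2 * σ * y = x - r) (m : ℕ) :
    ∑ k ∈ range (m + 2 + 1), coeff (m + 2) ((1 - C lam * X - C mu * X ^ 2) *
        (1 + C r * X + C s * X ^ 2)⁻¹ * (X * (1 + C r * X + C s * X ^ 2)⁻¹) ^ k) * x ^ k
      = σ ^ (m + 2) * (Chebyshev.U K (m + 2 : ℕ)).eval y
        - lam * (σ ^ (m + 1) * (Chebyshev.U K (m + 1 : ℕ)).eval y)
        - mu * (σ ^ m * (Chebyshev.U K m).eval y) := by
  set Q : K⟦X⟧ := 1 + C r * X + C s * X ^ 2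
  set G : K⟦X⟧ := mk fun n ↦ σ ^ n * (Chebyshev.U K n).eval y
  have hQ : Q * Q⁻¹ = 1 := PowerSeries.mul_inv_cancel _ (by simp [Q])
  have hG : G * (Q - C x * X) = 1 := by
    convert mk_scaled_chebyshevU_mul σ y using 2
    simp only [Q, hy, hs, map_sub]
    ring
  have hF : (Q * G) * (1 - C x * (X * Q⁻¹)) = 1 := by
    linear_combination -(C x * X * G) * hQ + hG
  rw [coeff_riordan_row_sum x (dvd_mul_right X _) hF]
  have hNG : (1 - C lam * X - C mu * X ^ 2) * Q⁻¹ * (Q * G)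
      = (1 + C (-lam) * X + C (-mu) * X ^ 2) * G := by
    simp only [map_neg]
    linear_combination (1 - C lam * X - C mu * X ^ 2) * G * hQ
  rw [hNG, coeff_add_two_quadratic_mul_mk]
  ring

end PowerSeries

/-- The rows of the Riordan array `((1-λt-μt²)/(1+rt+st²), t/(1+rt+st²))`
with `s = σ²` are the generalized Chebyshev polynomials
`σⁿU_n((x-r)/(2σ)) - λσ^{n-1}U_{n-1}((x-r)/(2σ)) - μσ^{n-2}U_{n-2}((x-r)/(2σ))`. -/
theorem stmt9 (r lam mu σ : ℝ) (hσ : σ ≠ 0) (s : ℝ) (hs : s = σ ^ 2)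
    (d : ℕ → ℕ → ℝ)
    (hd : ∀ n k : ℕ, d n k =
      PowerSeries.coeff (R := ℝ) n
        ((1 - PowerSeries.C (R := ℝ) lam * PowerSeries.X - PowerSeries.C (R := ℝ) mu * PowerSeries.X ^ 2) *
            (1 + PowerSeries.C (R := ℝ) r * PowerSeries.X + PowerSeries.C (R := ℝ) s * PowerSeries.X ^ 2)⁻¹ *
          (PowerSeries.X *
            (1 + PowerSeries.C (R := ℝ) r * PowerSeries.X +
              PowerSeries.C (R := ℝ) s * PowerSeries.X ^ 2)⁻¹) ^ k)) :
    ∀ n : ℕ, 2 ≤ n → ∀ x : ℝ,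
      ∑ k ∈ Finset.range (n + 1), d n k * x ^ k =
        σ ^ n * (Polynomial.Chebyshev.U ℝ (n : ℤ)).eval ((x - r) / (2 * σ)) -
          lam * σ ^ (n - 1) * (Polynomial.Chebyshev.U ℝ ((n : ℤ) - 1)).eval ((x - r) / (2 * σ)) -
          mu * σ ^ (n - 2) * (Polynomial.Chebyshev.U ℝ ((n : ℤ) - 2)).eval ((x - r) / (2 * σ)) := by
  intro n hn x
  obtain ⟨m, rfl⟩ : ∃ m, n = m + 2 := ⟨n - 2, by omega⟩
  simp only [hd]
  rw [sum_coeff_riordan_row_eq_chebyshevU r s lam mu σ x ((x - r) / (2 * σ)) hs (by field_simp)]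
  push_cast
  simp only [add_sub_cancel_right, show (m : ℤ) + 2 - 1 = m + 1 by ring]
  ring
end

section
/- Work over the polynomial ring ℚ[y]. Let M_{n,k} ∈ ℚ[y] be the coefficient of xⁿ in (1 + yx + yx²)·(1+x)⁻¹ · (x·(1+x)⁻²)^k, the entries of the Riordan array ((1+yx+yx²)/(1+x), x/(1+x)²). Let (μ_n)_{n≥0} be the unique sequence in ℚ[y] satisfying ∑_{k=0}^{n} M_{n,k}·μ_k = δ_{n,0} for all n (the first column of the inverse matrix, i.e. the moment sequence). Then for every n, μ_n = ∑_{k=0}^{n} t_{n,k}·y^k, where t_{n,k} ∈ ℚ is the coefficient of xⁿ in c·(-x·c³)^k. That is, the coefficient array of the moments of the generalized Chebyshev polynomials defined by ((1+yx+yx²)/(1+x), x/(1+x)²) is the Riordan involution (c, -x·c³). -/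
/-!
Let `H = c / (1 + y x c³)`, so that `[xᵏ] H = ∑ⱼ t_{k,j} yʲ`. Summing against the Riordan array
gives `∑ₖ M_{n,k} [xᵏ] H = [xⁿ] (1 + yx + yx²)/(1 + x) · H(x/(1 + x)²)`. Both `c(x/(1 + x)²)` and
`1 + x` solve `b = 1 + x/(1 + x)² · b²`, whose solution is unique, so
`H(x/(1 + x)²) = (1 + x)/(1 + yx + yx²)` and these sums are `δ_{n,0}`. As `M` is unitriangular,
the defining system of the `μₙ` has only one solution, hence `μₖ = [xᵏ] H`.
-/

open PowerSeries Finset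

namespace PowerSeries

variable {R : Type*} [CommRing R]

theorem coeff_mul_subst_eq_sum {F : R⟦X⟧} (hF : constantCoeff F = 0) (A H : R⟦X⟧) (n : ℕ) :
    coeff n (A * H.subst F) = ∑ k ∈ range (n + 1), coeff k H * coeff n (A * F ^ k) := by
  have hs := HasSubst.of_constantCoeff_zero' hF
  have htail : coeff n (A * (F ^ (n + 1) * (mk fun i ↦ coeff (i + (n + 1)) H).subst F)) = 0 := by
    refine X_pow_dvd_iff.mp ?_ n (Nat.lt_succ_self n)
    exact Dvd.dvd.mul_left ((pow_dvd_pow_of_dvd (X_dvd_iff.mpr hF) _).mul_right _) A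
  conv_lhs => rw [H.eq_X_pow_mul_shift_add_trunc (n + 1)]
  rw [subst_add hs, subst_mul hs, subst_pow hs,
    subst_X hs, subst_coe hs, mul_add, map_add, htail, zero_add, Polynomial.aeval_def,
    eval₂_trunc_eq_sum_range, mul_sum, map_sum]
  refine sum_congr rfl fun k _ ↦ ?_
  rw [algebraMap_eq, mul_left_comm, coeff_C_mul]

theorem coeff_mul_X_mul_pow_self (A B : R⟦X⟧) (n : ℕ) :
    coeff n (A * (X * B) ^ n) = constantCoeff A * constantCoeff B ^ n := by
  rw [mul_pow, mul_left_comm, coeff_X_pow_mul', if_pos le_rfl, Nat.sub_self,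
    coeff_zero_eq_constantCoeff, map_mul, map_pow]

theorem eq_zero_of_eq_mul_self {F u d : R⟦X⟧} (hF : constantCoeff F = 0) (h : d = F * u * d) :
    d = 0 := by
  have hX : ∀ k, X ^ k ∣ d := by
    intro k
    induction k with
    | zero => exact one_dvd d
    | succ k ih =>
      rw [h, pow_succ']
      exact mul_dvd_mul ((X_dvd_iff.mpr hF).mul_right u) ih
  ext n
  simpa using X_pow_dvd_iff.mp (hX (n + 1)) n (Nat.lt_succ_self n)

theorem eq_of_eq_one_add_mul_sq_s10 {F a b : R⟦X⟧} (hF : constantCoeff F = 0)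
    (ha : a = 1 + F * a ^ 2) (hb : b = 1 + F * b ^ 2) : a = b :=
  sub_eq_zero.mp <| eq_zero_of_eq_mul_self (u := a + b) hF (by linear_combination ha - hb)

theorem subst_catalan_eq_one_add_X {c v : R⟦X⟧} (hc : c = 1 + X * c ^ 2) (hv : (1 + X) * v = 1) :
    c.subst (X * v ^ 2) = 1 + X := by
  have hF : constantCoeff (X * v ^ 2 : R⟦X⟧) = 0 := by simp
  have hs := HasSubst.of_constantCoeff_zero' hF
  refine eq_of_eq_one_add_mul_sq_s10 hF ?_ (by linear_combination (-(X * ((1 + X) * v + 1))) * hv)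
  have := congrArg (substAlgHom hs) hc
  rwa [map_add, map_mul, map_pow, map_one, substAlgHom_X, coe_substAlgHom] at this

end PowerSeries

theorem eq_of_sum_mul_eq_of_diag_eq_one {R : Type*} [Ring R] {M : ℕ → ℕ → R} (hM : ∀ n, M n n = 1)
    {a b : ℕ → R} (hab : ∀ n, ∑ k ∈ range (n + 1), M n k * a k = ∑ k ∈ range (n + 1), M n k * b k) :
    a = b := by
  funext n
  induction n using Nat.strong_induction_on with
  | _ n ih =>
    have h := hab n
    rw [sum_range_succ, sum_range_succ, hM, one_mul, one_mul,
      sum_congr rfl fun k hk ↦ by rw [ih k (mem_range.mp hk)]] at h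
    exact add_left_cancel h

namespace RiordanMoments

variable {R : Type*} [CommRing R]

/-- `c / (1 + y X c³)`, the inverse being written as the geometric series `∑ⱼ (-y X c³)ʲ`. -/
noncomputable def momentSeries (c : R⟦X⟧) (y : R) : R⟦X⟧ :=
  c * (PowerSeries.mk 1 : R⟦X⟧).subst (-(C y * X * c ^ 3))

theorem one_add_mul_momentSeries (c : R⟦X⟧) (y : R) :
    (1 + C y * X * c ^ 3) * momentSeries c y = c := by
  have hs := HasSubst.of_constantCoeff_zero' (by simp : constantCoeff (-(C y * X * c ^ 3)) = 0)
  have h := congrArg (substAlgHom hs) (PowerSeries.mk_one_mul_one_sub_eq_one R)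
  rw [map_mul, map_sub, map_one, substAlgHom_X, coe_substAlgHom] at h
  rw [momentSeries]
  linear_combination c * h

theorem coeff_momentSeries (c : R⟦X⟧) (y : R) (k : ℕ) :
    coeff k (momentSeries c y) = ∑ j ∈ range (k + 1), coeff k (c * (-(C y * X * c ^ 3)) ^ j) := by
  rw [momentSeries, coeff_mul_subst_eq_sum (by simp)]
  simp only [coeff_mk, Pi.one_apply, one_mul]

theorem mul_subst_momentSeries_eq_one {c v : R⟦X⟧} (hc : c = 1 + X * c ^ 2) (hv : (1 + X) * v = 1)
    (y : R) : (1 + C y * X + C y * X ^ 2) * v * (momentSeries c y).subst (X * v ^ 2) = 1 := by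
  have hs := HasSubst.of_constantCoeff_zero' (by simp : constantCoeff (X * v ^ 2 : R⟦X⟧) = 0)
  have h := congrArg (substAlgHom hs) (one_add_mul_momentSeries c y)
  rw [map_mul, map_add, map_one, map_mul, map_mul, map_pow, substAlgHom_X, ← algebraMap_eq,
    AlgHom.commutes, coe_substAlgHom, subst_catalan_eq_one_add_X hc hv, algebraMap_eq] at h
  -- `h` has denominator `1 + y · X v² · (1 + X)³`, which is `1 + yX + yX²` since `v (1 + X) = 1`.
  linear_combination v * h +
    (1 - v * (momentSeries c y).subst (X * v ^ 2) * C y * X * (1 + X) * ((1 + X) * v + 1)) * hv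

theorem coeff_momentSeries_map_C (c : R⟦X⟧) (k : ℕ) :
    coeff k (momentSeries (c.map Polynomial.C) Polynomial.X) =
      ∑ j ∈ range (k + 1), Polynomial.C (coeff k (c * (-(X * c ^ 3)) ^ j)) * Polynomial.X ^ j := by
  rw [coeff_momentSeries]
  refine sum_congr rfl fun j _ ↦ ?_
  have h : c.map Polynomial.C * (-(C Polynomial.X * X * c.map Polynomial.C ^ 3)) ^ j =
      C (Polynomial.X ^ j) * (c * (-(X * c ^ 3)) ^ j).map Polynomial.C := by
    simp only [map_mul, map_pow, map_neg, map_X]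
    ring
  rw [h, coeff_C_mul, coeff_map, mul_comm]

end RiordanMoments

open RiordanMoments

theorem stmt10_general (c : PowerSeries ℚ)
    (hc : c = 1 + PowerSeries.X * c ^ 2)
    (v : PowerSeries (Polynomial ℚ)) (hv : (1 + PowerSeries.X) * v = 1)
    (M : ℕ → ℕ → Polynomial ℚ)
    (hM : ∀ n k : ℕ, M n k =
      PowerSeries.coeff (R := Polynomial ℚ) n
        ((1 + PowerSeries.C (R := Polynomial ℚ) Polynomial.X * PowerSeries.X +
            PowerSeries.C (R := Polynomial ℚ) Polynomial.X * PowerSeries.X ^ 2) * v *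
          (PowerSeries.X * v ^ 2) ^ k))
    (μ : ℕ → Polynomial ℚ)
    (hμ : ∀ n : ℕ, ∑ k ∈ Finset.range (n + 1), M n k * μ k = if n = 0 then 1 else 0) :
    ∀ n : ℕ, μ n = ∑ k ∈ Finset.range (n + 1),
      Polynomial.C (PowerSeries.coeff (R := ℚ) n (c * (-(PowerSeries.X * c ^ 3)) ^ k)) *
        Polynomial.X ^ k := by
  have hcC : c.map Polynomial.C = 1 + X * c.map Polynomial.C ^ 2 := by
    conv_lhs => rw [hc]
    simp only [map_add, map_one, map_mul, map_pow, map_X]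
  have hv0 : constantCoeff v = 1 := by simpa using congrArg constantCoeff hv
  have hdiag : ∀ n, M n n = 1 := fun n ↦ by
    simp [hM, coeff_mul_X_mul_pow_self, hv0]
  have hF : constantCoeff (X * v ^ 2) = 0 := by simp
  have hmoments : ∀ n, ∑ k ∈ range (n + 1),
      M n k * coeff k (momentSeries (c.map Polynomial.C) Polynomial.X) = if n = 0 then 1 else 0 := by
    intro n
    simp only [hM, mul_comm (coeff n _), ← coeff_mul_subst_eq_sum hF,
      mul_subst_momentSeries_eq_one hcC hv, coeff_one]
  intro n
  rw [congrFun (eq_of_sum_mul_eq_of_diag_eq_one hdiag fun n ↦ (hμ n).trans (hmoments n).symm) n,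
    coeff_momentSeries_map_C]

/-- The coefficient array of the moments of the generalized Chebyshev
polynomials defined by the Riordan array `((1+yx+yx²)/(1+x), x/(1+x)²)` is the
Riordan involution `(c, -x·c³)`, where `c` is the Catalan generating function. -/
theorem stmt10 (c : PowerSeries ℚ) (hc0 : PowerSeries.constantCoeff (R := ℚ) c = 1)
    (hc : c = 1 + PowerSeries.X * c ^ 2)
    (v : PowerSeries (Polynomial ℚ)) (hv : (1 + PowerSeries.X) * v = 1)
    (M : ℕ → ℕ → Polynomial ℚ)
    (hM : ∀ n k : ℕ, M n k =
      PowerSeries.coeff (R := Polynomial ℚ) n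
        ((1 + PowerSeries.C (R := Polynomial ℚ) Polynomial.X * PowerSeries.X +
            PowerSeries.C (R := Polynomial ℚ) Polynomial.X * PowerSeries.X ^ 2) * v *
          (PowerSeries.X * v ^ 2) ^ k))
    (μ : ℕ → Polynomial ℚ)
    (hμ : ∀ n : ℕ, ∑ k ∈ Finset.range (n + 1), M n k * μ k = if n = 0 then 1 else 0) :
    ∀ n : ℕ, μ n = ∑ k ∈ Finset.range (n + 1),
      Polynomial.C (PowerSeries.coeff (R := ℚ) n (c * (-(PowerSeries.X * c ^ 3)) ^ k)) *
        Polynomial.X ^ k :=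
  stmt10_general c hc v hv M hM μ hμ
end

section
/- In (ℚ[y])[[x]] one has the identity (1 - (2-y)·x - (1-y)·x²·c²)·c² = 1 + y·x·c³, where c is the Catalan generating function. Equivalently, the generating function c²/(1 + y·x·c³) of the moments μ_n^{(2)}(y) equals the continued fraction 1/(1 - (2-y)x - (1-y)x²·c²), whose tail c² is the value of the periodic continued fraction 1/(1-2x-x²/(1-2x-x²/(1-2x-··· ))). -/
/-- Writing `u = x c² = c - 1`, both sides reduce to `1 + y c (c - 1)`. -/
theorem catalan_sq_mul_continuedFraction_eq {R : Type*} [CommRing R] {x c : R} (y : R)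
    (hc : c = 1 + x * c ^ 2) :
    (1 - (2 - y) * x - (1 - y) * x ^ 2 * c ^ 2) * c ^ 2 = 1 + y * x * c ^ 3 := by
  linear_combination ((2 - y) + (1 - y) * (x * c ^ 2 + c - 1) + y * c) * hc

theorem stmt12_general (c : PowerSeries (Polynomial ℚ))
    (hc : c = 1 + PowerSeries.X * c ^ 2) :
    (1 - (2 - PowerSeries.C (Polynomial.X : Polynomial ℚ)) * PowerSeries.X -
        (1 - PowerSeries.C (Polynomial.X : Polynomial ℚ)) * PowerSeries.X ^ 2 * c ^ 2) * c ^ 2 =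
      1 + PowerSeries.C (Polynomial.X : Polynomial ℚ) * PowerSeries.X * c ^ 3 :=
  catalan_sq_mul_continuedFraction_eq _ hc

/-- In `(ℚ[y])[[x]]`: `(1 - (2-y)x - (1-y)x²c²)·c² = 1 + yxc³`, where `c` is the
Catalan generating function; i.e. the moment generating function `c²/(1+yxc³)`
equals the continued fraction `1/(1-(2-y)x-(1-y)x²c²)` with tail `c²`. -/
theorem stmt12 (c : PowerSeries (Polynomial ℚ))
    (hc0 : PowerSeries.constantCoeff c = 1)
    (hc : c = 1 + PowerSeries.X * c ^ 2) :
    (1 - (2 - PowerSeries.C (Polynomial.X : Polynomial ℚ)) * PowerSeries.X -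
        (1 - PowerSeries.C (Polynomial.X : Polynomial ℚ)) * PowerSeries.X ^ 2 * c ^ 2) * c ^ 2 =
      1 + PowerSeries.C (Polynomial.X : Polynomial ℚ) * PowerSeries.X * c ^ 3 :=
  stmt12_general c hc
end

section
/- For n ≥ 0 let μ_n ∈ ℚ[y] be the coefficient of xⁿ in c²·(1 + y·x·c³)⁻¹ ∈ (ℚ[y])[[x]] (the moment polynomials μ_n^{(2)}(y), i.e. the row polynomials of the Riordan involution (c², -x·c³)). Then the Hankel transform det(μ_{i+j})_{0≤i,j≤n} equals (1-y)ⁿ in ℚ[y]. -/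
open PowerSeries Finset

/-!
The `μ_n` are the moments of the Jacobi continued fraction with `b₀ = 2 - y`, `bₖ = 2` and
`λ₁ = 1 - y`, `λₖ = 1`: the columns `(x c²)ᵏ c² u` of the Riordan array `(c² u, x c²)` satisfy
the corresponding three-term recurrence, which is the identity `c = 1 + x c²` (together with
the definition of `u` for column `0`). For such a recurrence the Hankel matrix factors as
`L D Lᵀ`, with `L` the unitriangular array of weighted Motzkin path counts and
`D = diag(λ₁ ⋯ λₖ) = diag(1, 1 - y, 1 - y, …)`, so its determinant is `(1 - y)ⁿ`.
-/

section Motzkin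

variable {R : Type*} [CommRing R] (b l : ℕ → R)

/-- `motzkinArray b l n k` counts Motzkin paths of length `n` from height `0` to height `k`, where
an up step weighs `1`, a level step at height `k` weighs `b k` and a down step from height `k`
weighs `l k`. -/
def motzkinArray : ℕ → ℕ → R
  | 0, k => if k = 0 then 1 else 0
  | n + 1, 0 => b 0 * motzkinArray n 0 + l 1 * motzkinArray n 1
  | n + 1, k + 1 =>
    motzkinArray n k + b (k + 1) * motzkinArray n (k + 1) + l (k + 2) * motzkinArray n (k + 2)

def motzkinWeight (k : ℕ) : R := ∏ i ∈ range k, l (i + 1)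

def motzkinPairing (N i j : ℕ) : R :=
  ∑ k ∈ range N, motzkinWeight l k * (motzkinArray b l i k * motzkinArray b l j k)

def motzkinMatrix (n : ℕ) : Matrix (Fin (n + 1)) (Fin (n + 1)) R :=
  Matrix.of fun i k => motzkinArray b l i k

variable {b l}

theorem motzkinArray_eq_zero_of_lt {n k : ℕ} (h : n < k) : motzkinArray b l n k = 0 := by
  induction n generalizing k with
  | zero => simp [motzkinArray, h.ne']
  | succ n ih =>
    obtain ⟨k, rfl⟩ := Nat.exists_eq_add_of_lt (Nat.zero_lt_of_lt h)
    simp [motzkinArray, ih (by omega : n < k), ih (by omega : n < k + 1),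
      ih (by omega : n < k + 2)]

theorem motzkinArray_self (n : ℕ) : motzkinArray b l n n = 1 := by
  induction n with
  | zero => simp [motzkinArray]
  | succ n ih =>
    simp [motzkinArray, ih, motzkinArray_eq_zero_of_lt (Nat.lt_succ_self n),
      motzkinArray_eq_zero_of_lt (by omega : n < n + 2)]

theorem motzkinPairing_comm (N i j : ℕ) : motzkinPairing b l N i j = motzkinPairing b l N j i :=
  sum_congr rfl fun _ _ => by ring

theorem motzkinPairing_eq_of_lt {N i : ℕ} (j : ℕ) (h : i < N) :
    motzkinPairing b l N i j = motzkinPairing b l (i + 1) i j := by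
  refine (sum_subset (range_subset_range.2 h) fun k _ hk => ?_).symm
  rw [motzkinArray_eq_zero_of_lt (by simpa using hk), zero_mul, mul_zero]

theorem motzkinPairing_zero_left {N : ℕ} (j : ℕ) (h : 0 < N) :
    motzkinPairing b l N 0 j = motzkinArray b l j 0 := by
  rw [motzkinPairing_eq_of_lt j h]
  simp [motzkinPairing, motzkinWeight, motzkinArray]

/-- The right-hand side is symmetric in `i` and `j`. -/
theorem motzkinPairing_succ_left {N i : ℕ} (j : ℕ) (h : i < N) :
    motzkinPairing b l (N + 1) (i + 1) j =
      ∑ k ∈ range (N + 1), (motzkinWeight l k * b k *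
          (motzkinArray b l i k * motzkinArray b l j k) + motzkinWeight l (k + 1) *
          (motzkinArray b l i k * motzkinArray b l j (k + 1) +
            motzkinArray b l i (k + 1) * motzkinArray b l j k)) := by
  have hup : ∑ k ∈ range (N + 1),
      motzkinWeight l (k + 1) * (motzkinArray b l i k * motzkinArray b l j (k + 1)) =
      ∑ k ∈ range N,
      motzkinWeight l (k + 1) * (motzkinArray b l i k * motzkinArray b l j (k + 1)) := by
    rw [sum_range_succ, motzkinArray_eq_zero_of_lt h, zero_mul, mul_zero, add_zero]
  simp only [mul_add, sum_add_distrib, hup]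
  rw [motzkinPairing, sum_range_succ', sum_range_succ' _ N, sum_range_succ' _ N]
  simp only [motzkinArray, motzkinWeight, prod_range_succ, mul_add, add_mul, sum_add_distrib]
  ring_nf

theorem motzkinPairing_succ_left_eq {N i j : ℕ} (hi : i + 1 < N) (hj : j + 1 < N) :
    motzkinPairing b l N (i + 1) j = motzkinPairing b l N i (j + 1) := by
  obtain ⟨N, rfl⟩ := Nat.exists_eq_add_of_lt (Nat.zero_lt_of_lt hi)
  rw [zero_add, motzkinPairing_comm _ i, motzkinPairing_succ_left j (by omega),
    motzkinPairing_succ_left i (by omega)]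
  exact sum_congr rfl fun _ _ => by ring

theorem motzkinPairing_eq_motzkinArray {N i j : ℕ} (h : i + j < N) :
    motzkinPairing b l N i j = motzkinArray b l (i + j) 0 := by
  induction i generalizing j with
  | zero => rw [motzkinPairing_zero_left j (by omega), zero_add]
  | succ i ih =>
    rw [motzkinPairing_succ_left_eq (by omega) (by omega), ih (by omega), Nat.add_right_comm,
      Nat.add_assoc]

theorem motzkinMatrix_det (n : ℕ) : (motzkinMatrix b l n).det = 1 := by
  rw [Matrix.det_of_isLowerTriangular (motzkinMatrix b l n) fun _ _ h =>
    motzkinArray_eq_zero_of_lt h]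
  exact prod_eq_one fun i _ => motzkinArray_self i

theorem hankel_motzkinArray_eq (n : ℕ) :
    (Matrix.of fun i j : Fin (n + 1) => motzkinArray b l (i + j) 0) =
      motzkinMatrix b l n * Matrix.diagonal (fun k : Fin (n + 1) => motzkinWeight l k) *
        (motzkinMatrix b l n).transpose := by
  ext i j
  rw [Matrix.of_apply, ← motzkinPairing_eq_motzkinArray (Nat.lt_succ_self _),
    motzkinPairing_eq_of_lt j (by omega), ← motzkinPairing_eq_of_lt j i.is_lt, motzkinPairing,
    ← Fin.sum_univ_eq_sum_range (fun k => motzkinWeight l k *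
      (motzkinArray b l i k * motzkinArray b l j k)), Matrix.mul_apply]
  simp only [Matrix.mul_diagonal, motzkinMatrix, Matrix.of_apply, Matrix.transpose_apply]
  exact sum_congr rfl fun _ _ => by ring

theorem det_hankel_motzkinArray (n : ℕ) :
    (Matrix.of fun i j : Fin (n + 1) => motzkinArray b l (i + j) 0).det =
      ∏ k ∈ range (n + 1), motzkinWeight l k := by
  rw [hankel_motzkinArray_eq, Matrix.det_mul, Matrix.det_mul, Matrix.det_transpose,
    motzkinMatrix_det, Matrix.det_diagonal, Fin.prod_univ_eq_prod_range (motzkinWeight l),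
    one_mul, mul_one]

theorem coeff_eq_motzkinArray {g : ℕ → R⟦X⟧}
    (hg₀ : g 0 = 1 + X * (C (b 0) * g 0 + C (l 1) * g 1))
    (hg : ∀ k, g (k + 1) = X * (g k + C (b (k + 1)) * g (k + 1) + C (l (k + 2)) * g (k + 2)))
    (n k : ℕ) : coeff n (g k) = motzkinArray b l n k := by
  induction n generalizing k with
  | zero =>
    cases k with
    | zero => rw [hg₀]; simp [motzkinArray]
    | succ k => rw [hg]; simp [motzkinArray]
  | succ n ih =>
    cases k with
    | zero => rw [hg₀]; simp [motzkinArray, coeff_succ_X_mul, ih]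
    | succ k => rw [hg]; simp [motzkinArray, coeff_succ_X_mul, ih]

end Motzkin

noncomputable def levelWeight (k : ℕ) : Polynomial ℚ := if k = 0 then 2 - Polynomial.X else 2

noncomputable def downWeight (k : ℕ) : Polynomial ℚ := if k = 1 then 1 - Polynomial.X else 1

theorem prod_motzkinWeight_downWeight (n : ℕ) :
    ∏ k ∈ range (n + 1), motzkinWeight downWeight k = (1 - Polynomial.X) ^ n := by
  have hsucc (k : ℕ) : motzkinWeight downWeight (k + 1) = 1 - Polynomial.X := by
    simp [motzkinWeight, downWeight]
  rw [prod_range_succ', prod_congr rfl fun k _ => hsucc k, prod_const, card_range, motzkinWeight,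
    prod_range_zero, mul_one]

noncomputable def riordanColumn (c u : PowerSeries (Polynomial ℚ)) (k : ℕ) :
    PowerSeries (Polynomial ℚ) :=
  (X * c ^ 2) ^ k * (c ^ 2 * u)

section Riordan

variable {c u : PowerSeries (Polynomial ℚ)}

theorem riordanColumn_zero (hc : c = 1 + X * c ^ 2)
    (hu : (1 + C Polynomial.X * X * c ^ 3) * u = 1) :
    riordanColumn c u 0 = 1 + X * (C (levelWeight 0) * riordanColumn c u 0 +
      C (downWeight 1) * riordanColumn c u 1) := by
  simp only [riordanColumn, levelWeight, downWeight, if_pos, map_sub, map_ofNat, map_one,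
    pow_zero, pow_one, one_mul]
  linear_combination (u * ((1 - C Polynomial.X) * X * c ^ 2 + 1 + c)) * hc + hu

theorem riordanColumn_succ (hc : c = 1 + X * c ^ 2) (k : ℕ) :
    riordanColumn c u (k + 1) = X * (riordanColumn c u k +
      C (levelWeight (k + 1)) * riordanColumn c u (k + 1) +
      C (downWeight (k + 2)) * riordanColumn c u (k + 2)) := by
  simp only [riordanColumn, levelWeight, downWeight, Nat.succ_ne_zero, if_false,
    show k + 2 ≠ 1 by omega, map_ofNat, map_one]
  linear_combination (X * (X * c ^ 2) ^ k * c ^ 2 * u * (c + 1 + X * c ^ 2)) * hc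

end Riordan

theorem stmt13_general (c : PowerSeries (Polynomial ℚ))
    (hc : c = 1 + PowerSeries.X * c ^ 2)
    (u : PowerSeries (Polynomial ℚ))
    (hu : (1 + PowerSeries.C Polynomial.X * PowerSeries.X * c ^ 3) * u = 1)
    (μ : ℕ → Polynomial ℚ)
    (hμ : ∀ n : ℕ, μ n = PowerSeries.coeff n (c ^ 2 * u)) :
    ∀ n : ℕ,
      (Matrix.of fun i j : Fin (n + 1) => μ ((i : ℕ) + (j : ℕ))).det =
        (1 - Polynomial.X : Polynomial ℚ) ^ n := by
  have hμ' (m : ℕ) : μ m = motzkinArray levelWeight downWeight m 0 := by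
    rw [hμ, ← coeff_eq_motzkinArray (riordanColumn_zero hc hu) (riordanColumn_succ hc)]
    simp [riordanColumn]
  intro n
  simp only [hμ', det_hankel_motzkinArray, prod_motzkinWeight_downWeight]

/-- The Hankel transform of the moment polynomials `μ_n^{(2)}(y)`, the
coefficients of `c²·(1+yxc³)⁻¹`, equals `(1-y)ⁿ` in `ℚ[y]`. -/
theorem stmt13 (c : PowerSeries (Polynomial ℚ))
    (hc0 : PowerSeries.constantCoeff c = 1)
    (hc : c = 1 + PowerSeries.X * c ^ 2)
    (u : PowerSeries (Polynomial ℚ))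
    (hu : (1 + PowerSeries.C Polynomial.X * PowerSeries.X * c ^ 3) * u = 1)
    (μ : ℕ → Polynomial ℚ)
    (hμ : ∀ n : ℕ, μ n = PowerSeries.coeff n (c ^ 2 * u)) :
    ∀ n : ℕ,
      (Matrix.of fun i j : Fin (n + 1) => μ ((i : ℕ) + (j : ℕ))).det =
        (1 - Polynomial.X : Polynomial ℚ) ^ n :=
  stmt13_general c hc u hu μ hμ
end

section
/- Let a, b ∈ ℚ and let G₁ ∈ ℚ[[x]] be the unique formal power series with constant term 1 satisfying G₁ = 1 + a·x·G₁ + b·x²·G₁². For n ≥ 0 let μ_n ∈ ℚ[y] be the coefficient of xⁿ in the inverse of 1 - (2a-2-y)·x + (y-a+1)·x²·G₁ in (ℚ[y])[[x]]. Then the Hankel transform satisfies det(μ_{i+j})_{0≤i,j≤n} = (-1)ⁿ·(y-a+1)ⁿ·b^{n(n-1)/2} in ℚ[y]. -/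
/-!
The series `G₁` has the constant J-fraction `1/(1 - a x - b x²/(1 - a x - ⋯))`, so the moments `μₘ`
are those of the J-fraction with `b₀ = 2a-2-y`, `bₖ = a` and `λ₁ = -(y-a+1)`, `λₖ = b` (`k ≥ 1`).
Indeed, the series `(x G₁)ᵏ u` satisfy the recurrence
`μ_{m+1,k} = μ_{m,k-1} + bₖ μ_{m,k} + λ_{k+1} μ_{m,k+1}` of the Stieltjes table, so their
coefficients are the `μ_{m,k}`, and `μₘ = μ_{m,0}`. The Jacobi operator of this recurrence is
self-adjoint for the weights `λ₁ ⋯ λₖ`, whence `μ_{i+j} = ∑ₖ μ_{i,k} λ₁ ⋯ λₖ μ_{j,k}`. Thus the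
Hankel matrix is `L D Lᵀ` with `L = (μ_{i,k})` unitriangular, and its determinant is
`∏_{k ≤ n} λ₁ ⋯ λₖ = (-(y-a+1))ⁿ b^{n(n-1)/2}`.
-/

open PowerSeries Finset
open scoped Polynomial Matrix

section StieltjesTable

variable {S : Type*} [CommRing S]

def jacobiStep (β ℓ f : ℕ → S) (k : ℕ) : S :=
  (if k = 0 then 0 else f (k - 1)) + β k * f k + ℓ (k + 1) * f (k + 1)

def stieltjesTable (β ℓ : ℕ → S) (m : ℕ) : ℕ → S :=
  (jacobiStep β ℓ)^[m] (Pi.single 0 1)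

def jacobiWeight (ℓ : ℕ → S) (k : ℕ) : S :=
  ∏ i ∈ range k, ℓ (i + 1)

variable (β ℓ : ℕ → S)

theorem stieltjesTable_zero : stieltjesTable β ℓ 0 = Pi.single 0 1 := rfl

theorem stieltjesTable_succ (m : ℕ) :
    stieltjesTable β ℓ (m + 1) = jacobiStep β ℓ (stieltjesTable β ℓ m) :=
  Function.iterate_succ_apply' _ _ _

theorem stieltjesTable_eq_zero_of_lt {m k : ℕ} (h : m < k) : stieltjesTable β ℓ m k = 0 := by
  induction m generalizing k with
  | zero => simp [stieltjesTable_zero, Nat.pos_iff_ne_zero.mp h]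
  | succ m ih =>
    simp [stieltjesTable_succ, jacobiStep, ih (show m < k - 1 by omega), ih (show m < k by omega),
      ih (show m < k + 1 by omega), show k ≠ 0 by omega]

theorem stieltjesTable_self (m : ℕ) : stieltjesTable β ℓ m m = 1 := by
  induction m with
  | zero => simp [stieltjesTable_zero]
  | succ m ih =>
    simp [stieltjesTable_succ, jacobiStep, ih, stieltjesTable_eq_zero_of_lt]

theorem sum_jacobiStep_mul_eq {N : ℕ} {f g : ℕ → S} (hf : f N = 0) (hg : g N = 0) :
    ∑ k ∈ range (N + 1), jacobiStep β ℓ f k * jacobiWeight ℓ k * g k =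
      ∑ k ∈ range (N + 1), f k * jacobiWeight ℓ k * jacobiStep β ℓ g k := by
  have hw : ∀ k, jacobiWeight ℓ (k + 1) = jacobiWeight ℓ k * ℓ (k + 1) := fun k =>
    prod_range_succ _ k
  simp only [jacobiStep, add_mul, mul_add, sum_add_distrib]
  rw [sum_range_succ' (fun k => (if k = 0 then 0 else f (k - 1)) * _ * _),
    sum_range_succ' (fun k => _ * _ * (if k = 0 then 0 else g (k - 1))),
    sum_range_succ (fun k => ℓ (k + 1) * f (k + 1) * _ * _),
    sum_range_succ (fun k => _ * _ * (ℓ (k + 1) * g (k + 1)))]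
  simp only [hf, hg, hw, Nat.add_sub_cancel, if_pos, if_neg (Nat.succ_ne_zero _), zero_mul,
    mul_zero, add_zero]
  have h₁ : ∑ k ∈ range N, f k * (jacobiWeight ℓ k * ℓ (k + 1)) * g (k + 1) =
      ∑ k ∈ range N, f k * jacobiWeight ℓ k * (ℓ (k + 1) * g (k + 1)) :=
    sum_congr rfl fun _ _ => by ring
  have h₂ : ∑ k ∈ range N, ℓ (k + 1) * f (k + 1) * jacobiWeight ℓ k * g k =
      ∑ k ∈ range N, f (k + 1) * (jacobiWeight ℓ k * ℓ (k + 1)) * g k :=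
    sum_congr rfl fun _ _ => by ring
  have h₃ : ∑ k ∈ range (N + 1), β k * f k * jacobiWeight ℓ k * g k =
      ∑ k ∈ range (N + 1), f k * jacobiWeight ℓ k * (β k * g k) :=
    sum_congr rfl fun _ _ => by ring
  rw [h₁, h₂, h₃]
  ring

theorem sum_stieltjesTable_mul_eq {N i j : ℕ} (h : i + j ≤ N) :
    ∑ k ∈ range (N + 1), stieltjesTable β ℓ i k * jacobiWeight ℓ k * stieltjesTable β ℓ j k =
      stieltjesTable β ℓ (i + j) 0 := by
  induction i generalizing j with
  | zero => simp [stieltjesTable_zero, Pi.single_apply, jacobiWeight]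
  | succ i ih =>
    rw [stieltjesTable_succ,
      sum_jacobiStep_mul_eq β ℓ (stieltjesTable_eq_zero_of_lt β ℓ (by omega))
        (stieltjesTable_eq_zero_of_lt β ℓ (by omega)),
      ← stieltjesTable_succ, ih (by omega),
      Nat.add_right_comm, Nat.add_assoc]

theorem det_hankel_stieltjesTable (n : ℕ) :
    (Matrix.of fun i j : Fin (n + 1) => stieltjesTable β ℓ (i + j) 0).det =
      ∏ k ∈ range (n + 1), jacobiWeight ℓ k := by
  set L : Matrix (Fin (n + 1)) (Fin (n + 1)) S := Matrix.of fun i k => stieltjesTable β ℓ i k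
  have hL : L.det = 1 := by
    rw [Matrix.det_of_isLowerTriangular L fun i k hik => stieltjesTable_eq_zero_of_lt β ℓ hik]
    exact prod_eq_one fun i _ => stieltjesTable_self β ℓ i
  have hfactor : (Matrix.of fun i j : Fin (n + 1) => stieltjesTable β ℓ (i + j) 0) =
      L * Matrix.diagonal (fun k : Fin (n + 1) => jacobiWeight ℓ k) * Lᵀ := by
    ext i j
    have hvanish : ∀ k ∈ range (2 * n + 1), k ∉ range (n + 1) →
        stieltjesTable β ℓ i k * jacobiWeight ℓ k * stieltjesTable β ℓ j k = 0 := fun k _ hk => by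
      rw [stieltjesTable_eq_zero_of_lt β ℓ (show (i : ℕ) < k by simp at hk; omega), zero_mul,
        zero_mul]
    rw [Matrix.mul_apply]
    simp only [Matrix.mul_diagonal, Matrix.transpose_apply, Matrix.of_apply, L]
    rw [Fin.sum_univ_eq_sum_range (fun k => stieltjesTable β ℓ i k * jacobiWeight ℓ k *
        stieltjesTable β ℓ j k), sum_subset (range_subset_range.mpr (by omega)) hvanish,
      sum_stieltjesTable_mul_eq β ℓ (by omega)]
  rw [hfactor, Matrix.det_mul, Matrix.det_mul, Matrix.det_transpose, hL, Matrix.det_diagonal,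
    one_mul, mul_one, Fin.prod_univ_eq_prod_range (fun k => jacobiWeight ℓ k)]

theorem coeff_jacobiStep (v : ℕ → S⟦X⟧) (m k : ℕ) :
    coeff m (jacobiStep (fun k => C (β k)) (fun k => C (ℓ k)) v k) =
      jacobiStep β ℓ (fun k => coeff m (v k)) k := by
  by_cases hk : k = 0 <;> simp [jacobiStep, hk, coeff_C_mul]

theorem coeff_eq_stieltjesTable {v : ℕ → S⟦X⟧}
    (hv : ∀ k, v k = Pi.single 0 1 k + X * jacobiStep (fun k => C (β k)) (fun k => C (ℓ k)) v k)
    (m k : ℕ) : coeff m (v k) = stieltjesTable β ℓ m k := by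
  induction m generalizing k with
  | zero =>
    rw [hv, map_add, coeff_zero_X_mul, add_zero, stieltjesTable_zero]
    by_cases hk : k = 0 <;> simp [hk]
  | succ m ih =>
    rw [hv, map_add, coeff_succ_X_mul, coeff_jacobiStep, stieltjesTable_succ]
    by_cases hk : k = 0 <;> simp [hk, ih]

theorem prod_range_jacobiWeight {c e : S} (h₁ : ℓ 1 = c) (h₂ : ∀ k, ℓ (k + 2) = e) (n : ℕ) :
    ∏ k ∈ range (n + 1), jacobiWeight ℓ k = c ^ n * e ^ (n * (n - 1) / 2) := by
  have hw : ∀ k, jacobiWeight ℓ (k + 1) = c * e ^ k := fun k => by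
    rw [jacobiWeight, prod_range_succ', h₁, mul_comm]
    simp [h₂]
  rw [prod_range_succ', prod_congr rfl fun k _ => hw k, prod_mul_distrib, prod_const, card_range,
    prod_pow_eq_pow_sum, sum_range_id]
  simp [jacobiWeight]

end StieltjesTable

theorem stmt15_general (a b : ℚ) (G₁ : PowerSeries ℚ)
    (hG : G₁ = 1 + PowerSeries.C a * PowerSeries.X * G₁ +
      PowerSeries.C b * PowerSeries.X ^ 2 * G₁ ^ 2)
    (u : PowerSeries (Polynomial ℚ))
    (hu : (1 - (PowerSeries.C (Polynomial.C (2 * a - 2) - Polynomial.X)) *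
            PowerSeries.X +
          (PowerSeries.C (Polynomial.X - Polynomial.C a + 1)) *
            PowerSeries.X ^ 2 *
            PowerSeries.map (algebraMap ℚ (Polynomial ℚ)) G₁) * u = 1)
    (μ : ℕ → Polynomial ℚ)
    (hμ : ∀ n : ℕ, μ n = PowerSeries.coeff n u) :
    ∀ n : ℕ,
      (Matrix.of fun i j : Fin (n + 1) => μ ((i : ℕ) + (j : ℕ))).det =
        (-1 : Polynomial ℚ) ^ n * (Polynomial.X - Polynomial.C a + 1) ^ n *
          Polynomial.C (b ^ (n * (n - 1) / 2)) := by
  intro n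
  set G := PowerSeries.map (algebraMap ℚ ℚ[X]) G₁
  have hG' : G = 1 + C (Polynomial.C a) * X * G + C (Polynomial.C b) * X ^ 2 * G ^ 2 := by
    simpa [G, Polynomial.algebraMap_eq] using congrArg (PowerSeries.map (algebraMap ℚ ℚ[X])) hG
  set β : ℕ → ℚ[X] := fun k => if k = 0 then Polynomial.C (2 * a - 2) - Polynomial.X
    else Polynomial.C a
  set ℓ : ℕ → ℚ[X] := fun k => if k = 1 then -(Polynomial.X - Polynomial.C a + 1)
    else Polynomial.C b
  have hrec : ∀ k, (X * G) ^ k * u = Pi.single 0 1 k +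
      X * jacobiStep (fun k => C (β k)) (fun k => C (ℓ k)) (fun k => (X * G) ^ k * u) k := by
    rintro (_ | k)
    · simp only [jacobiStep, β, ℓ, Pi.single_eq_same, if_true, zero_add, pow_zero, pow_one,
        map_neg]
      linear_combination hu
    · simp only [jacobiStep, β, ℓ, Pi.single_apply, Nat.succ_ne_zero, if_false, Nat.add_sub_cancel,
        show k + 1 + 1 ≠ 1 by omega]
      linear_combination (X * G) ^ k * X * u * hG'
  have hmoment : ∀ m, μ m = stieltjesTable β ℓ m 0 := fun m => by
    rw [hμ, ← coeff_eq_stieltjesTable β ℓ hrec, pow_zero, one_mul]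
  simp only [hmoment]
  rw [det_hankel_stieltjesTable,
    prod_range_jacobiWeight ℓ (c := -(Polynomial.X - Polynomial.C a + 1)) (e := Polynomial.C b)
      (by simp [ℓ]) (fun k => by simp [ℓ]),
    neg_pow, map_pow]

/-- Let `G₁ = 1 + axG₁ + bx²G₁²`. The moments `μ_n(y)` with generating function
`(1 - (2a-2-y)x + (y-a+1)x²G₁)⁻¹` have Hankel transform
`(-1)ⁿ(y-a+1)ⁿ b^{n(n-1)/2}` in `ℚ[y]`. -/
theorem stmt15 (a b : ℚ) (G₁ : PowerSeries ℚ)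
    (hG0 : PowerSeries.constantCoeff G₁ = 1)
    (hG : G₁ = 1 + PowerSeries.C a * PowerSeries.X * G₁ +
      PowerSeries.C b * PowerSeries.X ^ 2 * G₁ ^ 2)
    (u : PowerSeries (Polynomial ℚ))
    (hu : (1 - (PowerSeries.C (Polynomial.C (2 * a - 2) - Polynomial.X)) *
            PowerSeries.X +
          (PowerSeries.C (Polynomial.X - Polynomial.C a + 1)) *
            PowerSeries.X ^ 2 *
            PowerSeries.map (algebraMap ℚ (Polynomial ℚ)) G₁) * u = 1)
    (μ : ℕ → Polynomial ℚ)
    (hμ : ∀ n : ℕ, μ n = PowerSeries.coeff n u) :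
    ∀ n : ℕ,
      (Matrix.of fun i j : Fin (n + 1) => μ ((i : ℕ) + (j : ℕ))).det =
        (-1 : Polynomial ℚ) ^ n * (Polynomial.X - Polynomial.C a + 1) ^ n *
          Polynomial.C (b ^ (n * (n - 1) / 2)) :=
  stmt15_general a b G₁ hG u hu μ hμ
end

section
/- Let C = c∘(x²) ∈ ℚ[[x]] be the Catalan generating function evaluated at x² (so C = 1 + x²·C²). Then: (i) in (ℚ[y])[[x]] one has the identity C·(1 + y·x - (1-y)·x²·C) = 1 + y·((1+x)·C - 1), identifying the generating function of the moments of the generalized Chebyshev polynomials of the first kind with the bivariate generating function of the Riordan array (c(x²), (1+x)c(x²)-1); (ii) for μ_n ∈ ℚ[y] the coefficient of xⁿ in (1 + y·x - (1-y)·x²·C)⁻¹, the Hankel transform satisfies det(μ_{i+j})_{0≤i,j≤n} = (1-y)ⁿ in ℚ[y]. -/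
/-!
From `C = 1 + x²C²`, identity (i) is a rearrangement of the quadratic equation. For (ii), the
coefficients `a n k = [xⁿ] u·(xC)ᵏ` form the Stieltjes table of the J-fraction with `b₀ = -y`,
`bₖ = 0`, `λ₀ = 1 - y`, `λₖ = 1`: the recursions come from `xC = x + x(xC)²` and
`u = 1 + x(-y·u + (1 - y)·u·xC)`. For every Stieltjes table the Hankel matrix of the moments
`a n 0` factors as `L · diag(w) · Lᵀ` with `L = (a i k)` lower unitriangular and
`w k = λ₀ ⋯ λₖ₋₁`, so the Hankel determinant is `∏ₖ w k = (1 - y)ⁿ`.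
-/

open PowerSeries Finset

structure IsStieltjesTable {R : Type*} [CommRing R] (b lam : ℕ → R) (a : ℕ → ℕ → R) : Prop where
  zero_zero : a 0 0 = 1
  zero_succ (k : ℕ) : a 0 (k + 1) = 0
  succ_zero (n : ℕ) : a (n + 1) 0 = b 0 * a n 0 + lam 0 * a n 1
  succ_succ (n k : ℕ) :
    a (n + 1) (k + 1) = a n k + b (k + 1) * a n (k + 1) + lam (k + 1) * a n (k + 2)

def stieltjesWeight {M : Type*} [CommMonoid M] (lam : ℕ → M) (k : ℕ) : M :=
  ∏ i ∈ range k, lam i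

def rowPairing {R : Type*} [CommSemiring R] (lam : ℕ → R) (a : ℕ → ℕ → R) (N i j : ℕ) : R :=
  ∑ k ∈ range N, a i k * stieltjesWeight lam k * a j k

@[simp]
theorem stieltjesWeight_zero {M : Type*} [CommMonoid M] (lam : ℕ → M) :
    stieltjesWeight lam 0 = 1 :=
  prod_range_zero _

theorem stieltjesWeight_succ {M : Type*} [CommMonoid M] (lam : ℕ → M) (k : ℕ) :
    stieltjesWeight lam (k + 1) = lam k * stieltjesWeight lam k := by
  rw [stieltjesWeight, stieltjesWeight, prod_range_succ, mul_comm]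

theorem rowPairing_comm {R : Type*} [CommSemiring R] (lam : ℕ → R) (a : ℕ → ℕ → R) (N i j : ℕ) :
    rowPairing lam a N i j = rowPairing lam a N j i :=
  sum_congr rfl fun _ _ => by ring

namespace IsStieltjesTable

variable {R : Type*} [CommRing R] {b lam : ℕ → R} {a : ℕ → ℕ → R}

theorem eq_zero_of_lt (h : IsStieltjesTable b lam a) {n k : ℕ} (hnk : n < k) : a n k = 0 := by
  induction n generalizing k with
  | zero => obtain ⟨k, rfl⟩ := Nat.exists_eq_succ_of_ne_zero hnk.ne'; exact h.zero_succ k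
  | succ n ih =>
    obtain ⟨k, rfl⟩ := Nat.exists_eq_succ_of_ne_zero (by omega : k ≠ 0)
    rw [h.succ_succ, ih (by omega), ih (by omega), ih (by omega)]
    ring

theorem apply_self (h : IsStieltjesTable b lam a) (n : ℕ) : a n n = 1 := by
  induction n with
  | zero => exact h.zero_zero
  | succ n ih => rw [h.succ_succ, ih, h.eq_zero_of_lt (by omega), h.eq_zero_of_lt (by omega)]; ring

theorem rowPairing_eq_of_lt (h : IsStieltjesTable b lam a) {N i : ℕ} (hi : i < N) (j : ℕ) :
    rowPairing lam a N i j = rowPairing lam a (i + 1) i j := by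
  refine (sum_subset (range_subset_range.2 hi) fun k _ hk => ?_).symm
  rw [h.eq_zero_of_lt (by simpa using hk), zero_mul, zero_mul]

/-- Row `n + 1` is row `n` times a tridiagonal matrix `J`, and `J · diag(w)` is symmetric since
`w (k + 1) = λ k * w k`: the right-hand side is symmetric in `i` and `j` up to swapping the last
two sums. -/
theorem rowPairing_succ_left (h : IsStieltjesTable b lam a) {N i : ℕ} (hi : i < N) (j : ℕ) :
    rowPairing lam a (N + 1) (i + 1) j =
      ∑ k ∈ range (N + 1), b k * stieltjesWeight lam k * a i k * a j k +
      ∑ k ∈ range (N + 1), stieltjesWeight lam (k + 1) * a i k * a j (k + 1) +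
      ∑ k ∈ range (N + 1), stieltjesWeight lam (k + 1) * a i (k + 1) * a j k := by
  have hterm : ∀ k ∈ range N,
      a (i + 1) (k + 1) * stieltjesWeight lam (k + 1) * a j (k + 1) =
        b (k + 1) * stieltjesWeight lam (k + 1) * a i (k + 1) * a j (k + 1) +
          stieltjesWeight lam (k + 1) * a i k * a j (k + 1) +
          stieltjesWeight lam (k + 1 + 1) * a i (k + 1 + 1) * a j (k + 1) := by
    intro k _
    rw [h.succ_succ, stieltjesWeight_succ lam (k + 1)]
    ring
  have hlast : stieltjesWeight lam (N + 1) * a i N * a j (N + 1) = 0 := by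
    rw [h.eq_zero_of_lt hi]; ring
  rw [rowPairing, sum_range_succ', sum_congr rfl hterm, sum_add_distrib, sum_add_distrib,
    sum_range_succ' (fun k => b k * stieltjesWeight lam k * a i k * a j k), sum_range_succ _ N,
    hlast, sum_range_succ' (fun k => stieltjesWeight lam (k + 1) * a i (k + 1) * a j k),
    h.succ_zero, zero_add, stieltjesWeight_succ lam 0, stieltjesWeight_zero]
  ring

theorem rowPairing_succ_left_eq_succ_right (h : IsStieltjesTable b lam a) {N i j : ℕ} (hi : i < N)
    (hj : j < N) : rowPairing lam a (N + 1) (i + 1) j = rowPairing lam a (N + 1) i (j + 1) := by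
  rw [rowPairing_comm lam a _ i, h.rowPairing_succ_left hi, h.rowPairing_succ_left hj, add_assoc,
    add_assoc, add_comm (∑ k ∈ range (N + 1), _ * a j k * a i (k + 1))]
  congr 1
  · exact sum_congr rfl fun _ _ => by ring
  · congr 1 <;> exact sum_congr rfl fun _ _ => by ring

theorem rowPairing_eq_moment (h : IsStieltjesTable b lam a) {N i j : ℕ} (hN : i + j < N) :
    rowPairing lam a N i j = a (i + j) 0 := by
  induction j generalizing i with
  | zero =>
    rw [rowPairing, sum_eq_single_of_mem 0 (mem_range.2 (by omega)), h.zero_zero]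
    · simp [stieltjesWeight]
    · intro k _ hk
      obtain ⟨k, rfl⟩ := Nat.exists_eq_succ_of_ne_zero hk
      rw [h.zero_succ, mul_zero]
  | succ j ih =>
    obtain ⟨M, rfl⟩ := Nat.exists_eq_succ_of_ne_zero (by omega : N ≠ 0)
    rw [← h.rowPairing_succ_left_eq_succ_right (by omega) (by omega), ih (by omega)]
    ring_nf

theorem hankel_det (h : IsStieltjesTable b lam a) (n : ℕ) :
    (Matrix.of fun i j : Fin (n + 1) => a (i + j) 0).det =
      ∏ k ∈ range (n + 1), stieltjesWeight lam k := by
  set L : Matrix (Fin (n + 1)) (Fin (n + 1)) R := Matrix.of fun i k => a i k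
  have hfactor : (Matrix.of fun i j : Fin (n + 1) => a (i + j) 0) =
      L * Matrix.diagonal (fun k : Fin (n + 1) => stieltjesWeight lam k) * L.transpose := by
    ext i j
    rw [Matrix.of_apply, Matrix.mul_apply]
    simp only [L, Matrix.mul_diagonal, Matrix.transpose_apply, Matrix.of_apply]
    rw [Fin.sum_univ_eq_sum_range (fun k => a i k * stieltjesWeight lam k * a j k),
      ← rowPairing, h.rowPairing_eq_of_lt i.isLt, ← h.rowPairing_eq_of_lt (N := i + j + 1)
      (by omega), h.rowPairing_eq_moment (by omega)]
  have hL : L.det = 1 := by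
    rw [Matrix.det_of_isLowerTriangular L fun i k hik => h.eq_zero_of_lt hik]
    exact prod_eq_one fun i _ => h.apply_self i
  rw [hfactor, Matrix.det_mul, Matrix.det_mul, Matrix.det_transpose, hL, Matrix.det_diagonal,
    Fin.prod_univ_eq_prod_range (stieltjesWeight lam), one_mul, mul_one]

end IsStieltjesTable

theorem PowerSeries.comp_eq_subst_s19 {R : Type*} [CommRing R] (f h : R⟦X⟧)
    (hh : constantCoeff h = 0) : f.comp h = f.subst h := by
  ext n
  rw [coeff_subst' (HasSubst.of_constantCoeff_zero' hh), PowerSeries.comp, coeff_mk,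
    finsum_eq_sum_of_support_subset _ (s := range (n + 1)) fun d hd => ?_]
  · simp only [smul_eq_mul]
  · by_contra hdn
    apply hd
    show coeff d f • coeff n (h ^ d) = 0
    rw [coeff_of_lt_order n ?_, smul_zero]
    exact (Nat.cast_lt.2 (by simpa using hdn)).trans_le (le_order_pow_of_constantCoeff_eq_zero d hh)

section

variable {R : Type*} [CommRing R]

theorem isStieltjesTable_coeff_mul_pow {y : R} {D u : R⟦X⟧} (hD : D = 1 + X ^ 2 * D ^ 2)
    (hu : (1 + C y * X - (1 - C y) * X ^ 2 * D) * u = 1) :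
    IsStieltjesTable (fun k => if k = 0 then -y else 0) (fun k => if k = 0 then 1 - y else 1)
      (fun n k => coeff n (u * (X * D) ^ k)) where
  zero_zero := by
    simpa using congrArg constantCoeff hu
  zero_succ k := by
    rw [pow_succ, mul_comm X, ← mul_assoc, ← mul_assoc, coeff_zero_mul_X]
  succ_zero n := by
    have hrec : u = 1 + X * (C (-y) * u + C (1 - y) * (u * (X * D))) := by
      rw [map_neg, map_sub, map_one]
      linear_combination hu
    have := congrArg (coeff (n + 1)) hrec
    rw [map_add, coeff_one, if_neg n.succ_ne_zero, zero_add, coeff_succ_X_mul, map_add,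
      coeff_C_mul, coeff_C_mul] at this
    simpa using this
  succ_succ n k := by
    have hrec : u * (X * D) ^ (k + 1) = X * (u * (X * D) ^ k + u * (X * D) ^ (k + 2)) := by
      linear_combination X * u * (X * D) ^ k * hD
    simp only [Nat.add_one_ne_zero, if_false, zero_mul, add_zero, one_mul]
    rw [hrec, coeff_succ_X_mul, map_add]

theorem prod_stieltjesWeight_eq_pow (y : R) (n : ℕ) :
    ∏ k ∈ range (n + 1), stieltjesWeight (fun k => if k = 0 then 1 - y else 1) k = (1 - y) ^ n := by
  simp [prod_range_succ', stieltjesWeight]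

end

theorem stmt19_general (c : PowerSeries ℚ)
    (hc : c = 1 + PowerSeries.X * c ^ 2)
    (D : PowerSeries (Polynomial ℚ))
    (hD : D = PowerSeries.map (algebraMap ℚ (Polynomial ℚ))
      (PowerSeries.comp c (PowerSeries.X ^ 2))) :
    D * (1 + PowerSeries.C (R := Polynomial ℚ) Polynomial.X * PowerSeries.X -
          (1 - PowerSeries.C (R := Polynomial ℚ) Polynomial.X) * PowerSeries.X ^ 2 * D) =
        1 + PowerSeries.C (R := Polynomial ℚ) Polynomial.X * ((1 + PowerSeries.X) * D - 1) ∧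
      (∀ u : PowerSeries (Polynomial ℚ),
        (1 + PowerSeries.C (R := Polynomial ℚ) Polynomial.X * PowerSeries.X -
          (1 - PowerSeries.C (R := Polynomial ℚ) Polynomial.X) * PowerSeries.X ^ 2 * D) * u = 1 →
        ∀ μ : ℕ → Polynomial ℚ,
          (∀ n : ℕ, μ n = PowerSeries.coeff (R := Polynomial ℚ) n u) →
          ∀ n : ℕ,
            (Matrix.of fun i j : Fin (n + 1) => μ ((i : ℕ) + (j : ℕ))).det =
              (1 - Polynomial.X : Polynomial ℚ) ^ n) := by
  have hX2 : HasSubst (X ^ 2 : ℚ⟦X⟧) := .X_pow two_ne_zero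
  have hD2 : D = 1 + X ^ 2 * D ^ 2 := by
    rw [hD, comp_eq_subst_s19 _ _ (by simp)]
    conv_lhs => rw [hc]
    rw [← coe_substAlgHom hX2, map_add, map_one, map_mul, map_pow, substAlgHom_X]
    simp
  refine ⟨by linear_combination (1 - C Polynomial.X) * hD2, fun u hu μ hμ n => ?_⟩
  have hμ' : μ = fun m => coeff m (u * (X * D) ^ 0) := by
    funext m
    rw [hμ, pow_zero, mul_one]
  rw [hμ', (isStieltjesTable_coeff_mul_pow hD2 hu).hankel_det, prod_stieltjesWeight_eq_pow]

/-- Let `C = c∘(x²)` where `c` is the Catalan generating function. Then (i) in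
`(ℚ[y])[[x]]` one has `C·(1 + yx - (1-y)x²C) = 1 + y((1+x)C - 1)`, and (ii) the
moments `μ_n = [xⁿ](1 + yx - (1-y)x²C)⁻¹` have Hankel transform `(1-y)ⁿ`. -/
theorem stmt19 (c : PowerSeries ℚ)
    (hc0 : PowerSeries.constantCoeff c = 1)
    (hc : c = 1 + PowerSeries.X * c ^ 2)
    (D : PowerSeries (Polynomial ℚ))
    (hD : D = PowerSeries.map (algebraMap ℚ (Polynomial ℚ))
      (PowerSeries.comp c (PowerSeries.X ^ 2))) :
    D * (1 + PowerSeries.C (R := Polynomial ℚ) Polynomial.X * PowerSeries.X -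
          (1 - PowerSeries.C (R := Polynomial ℚ) Polynomial.X) * PowerSeries.X ^ 2 * D) =
        1 + PowerSeries.C (R := Polynomial ℚ) Polynomial.X * ((1 + PowerSeries.X) * D - 1) ∧
      (∀ u : PowerSeries (Polynomial ℚ),
        (1 + PowerSeries.C (R := Polynomial ℚ) Polynomial.X * PowerSeries.X -
          (1 - PowerSeries.C (R := Polynomial ℚ) Polynomial.X) * PowerSeries.X ^ 2 * D) * u = 1 →
        ∀ μ : ℕ → Polynomial ℚ,
          (∀ n : ℕ, μ n = PowerSeries.coeff (R := Polynomial ℚ) n u) →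
          ∀ n : ℕ,
            (Matrix.of fun i j : Fin (n + 1) => μ ((i : ℕ) + (j : ℕ))).det =
              (1 - Polynomial.X : Polynomial ℚ) ^ n) :=
  stmt19_general c hc D hD
end
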